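/- arXiv:1907.06729 — 4 statements merged into one kernel-verified Lean document; each statement's English description precedes it below -/
import Mathlib

section
/- Suppose v : [0,T] × ℝ^d → ℝ is continuous, C^{1,2} on (0,T] × ℝ^d, satisfies ∂_t v(t,x) ≤ Δ_x v(t,x) for all t ∈ (0,T], x ∈ ℝ^d, and satisfies the growth condition inf_{a ∈ ℝ} sup_{(t,x)} e^{a‖x‖²} v(t,x) < ∞, where ‖·‖ is the Euclidean norm. Then sup_{(t,x) ∈ [0,T] × ℝ^d} v(t,x) = sup_{x ∈ ℝ^d} v(0,x). -/
set_option maxHeartbeats 1000000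
open Set Real Filter


lemma deriv_nonneg_of_max_left {f : ℝ → ℝ} {t₀ t : ℝ} (ht : t₀ < t)
    (hd : DifferentiableAt ℝ f t) (hle : ∀ s ∈ Set.Icc t₀ t, f s ≤ f t) :
    0 ≤ deriv f t := by
  have H := hd.hasDerivAt
  rw [hasDerivAt_iff_tendsto_slope] at H
  have H' : Tendsto (slope f t) (nhdsWithin t (Iio t)) (nhds (deriv f t)) :=
    H.mono_left (nhdsWithin_mono _ (fun s hs => ne_of_lt hs))
  refine ge_of_tendsto H' ?_
  filter_upwards [Ioo_mem_nhdsLT_of_mem (⟨ht, le_refl t⟩ : t ∈ Ioc t₀ t)] with s hs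
  have h1 : f s - f t ≤ 0 := sub_nonpos.mpr (hle s ⟨hs.1.le, hs.2.le⟩)
  have h2 : s - t ≤ 0 := (sub_neg.mpr hs.2).le
  rw [slope_def_field]
  exact div_nonneg_of_nonpos h1 h2

lemma iteratedDeriv_two_nonpos_of_isLocalMax {g : ℝ → ℝ}
    (hg : ContDiff ℝ 2 g) (hmax : IsLocalMax g 0) :
    iteratedDeriv 2 g 0 ≤ 0 := by
  have h2 : Differentiable ℝ g ∧ ContDiff ℝ 1 (deriv g) := by
    have := (contDiff_succ_iff_deriv (n := 1)).mp (by exact_mod_cast hg)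
    exact ⟨this.1, this.2.2⟩
  have hdg : Differentiable ℝ (deriv g) := h2.2.differentiable one_ne_zero
  have heq : iteratedDeriv 2 g 0 = deriv (deriv g) 0 := by
    rw [iteratedDeriv_succ, iteratedDeriv_one]
  rw [heq]
  by_contra hpos
  push_neg at hpos
  have h0 : deriv g 0 = 0 := hmax.deriv_eq_zero
  have HL : HasDerivAt (deriv g) (deriv (deriv g) 0) 0 := (hdg 0).hasDerivAt
  rw [hasDerivAt_iff_tendsto_slope] at HL
  have hev : ∀ᶠ s in nhdsWithin (0:ℝ) {(0:ℝ)}ᶜ, 0 < slope (deriv g) 0 s :=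
    HL.eventually (eventually_gt_nhds hpos)
  -- get δ such that slope > 0 on punctured ball, and g s ≤ g 0 on ball
  obtain ⟨δ₁, hδ₁, hball⟩ := Metric.mem_nhdsWithin_iff.mp hev
  obtain ⟨δ₂, hδ₂, hball2⟩ := Metric.eventually_nhds_iff.mp hmax
  set δ := min δ₁ δ₂ with hδdef
  have hδ : 0 < δ := lt_min hδ₁ hδ₂
  -- deriv g > 0 on Ioo 0 δ
  have hpos' : ∀ s ∈ Ioo (0:ℝ) δ, 0 < deriv g s := by
    intro s hs
    have hsne : s ≠ 0 := ne_of_gt hs.1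
    have hdist : dist s 0 < δ₁ := by
      rw [Real.dist_eq, sub_zero, abs_of_pos hs.1]; exact hs.2.trans_le (min_le_left _ _)
    have : 0 < slope (deriv g) 0 s := hball ⟨Metric.mem_ball.mpr hdist, hsne⟩
    rw [slope_def_field, h0] at this
    simp only [sub_zero] at this
    have := mul_pos this hs.1
    rwa [div_mul_cancel₀ _ hsne] at this
  have hmono : StrictMonoOn g (Icc 0 δ) := by
    refine strictMonoOn_of_deriv_pos (convex_Icc _ _) (h2.1.continuous.continuousOn) ?_
    intro s hs
    rw [interior_Icc] at hs
    exact hpos' s hs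
  have hlt : g 0 < g (δ/2) :=
    hmono ⟨le_refl 0, hδ.le⟩ ⟨(half_pos hδ).le, (half_lt_self hδ).le⟩ (half_pos hδ)
  have hle : g (δ/2) ≤ g 0 := by
    apply hball2
    rw [Real.dist_eq, sub_zero, abs_of_pos (half_pos hδ)]
    exact lt_of_lt_of_le (half_lt_self hδ) (min_le_right _ _)
  exact absurd hle (not_le.mpr hlt)

-- L4: norm expansion
lemma norm_line_sq (d : ℕ) (y : EuclideanSpace ℝ (Fin d)) (k : Fin d) (s : ℝ) :
    ‖y + s • EuclideanSpace.single k (1:ℝ)‖^2 = ‖y‖^2 + 2*(y k)*s + s^2 := by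
  rw [norm_add_sq_real, real_inner_smul_right, EuclideanSpace.inner_single_right,
    norm_smul, EuclideanSpace.norm_single]
  simp [Real.norm_eq_abs, mul_pow, sq_abs]
  ring


-- time derivative of K(t) = (c-t)^p * exp(q/(4(c-t))), p = -d/2
lemma K_time_hasDerivAt (d : ℕ) (c q t : ℝ) (h : t < c) :
    HasDerivAt (fun s => (c - s) ^ (-(d:ℝ)/2) * Real.exp (q / (4*(c - s))))
      ((c-t) ^ (-(d:ℝ)/2) * Real.exp (q/(4*(c-t))) *
        ((d:ℝ)/(2*(c-t)) + q/(4*(c-t)^2))) t := by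
  have hu : (0:ℝ) < c - t := sub_pos.mpr h
  set p : ℝ := -(d:ℝ)/2 with hp
  have h1 : HasDerivAt (fun s : ℝ => c - s) (-1) t := by
    simpa using (hasDerivAt_id t).const_sub c
  have h2 : HasDerivAt (fun s : ℝ => (c - s) ^ p) ((p * (c-t) ^ (p-1)) * (-1)) t :=
    (Real.hasDerivAt_rpow_const (Or.inl hu.ne')).comp t h1
  have h3 : HasDerivAt (fun s : ℝ => (c - s)⁻¹) (-(-1) / (c-t)^2) t := h1.inv hu.ne'
  have h4 : HasDerivAt (fun s : ℝ => q / (4*(c - s))) (q/4 * (-(-1)/(c-t)^2)) t := by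
    have : HasDerivAt (fun s : ℝ => q/4 * (c - s)⁻¹) (q/4 * (-(-1)/(c-t)^2)) t :=
      h3.const_mul (q/4)
    convert this using 2 with s
    rw [div_eq_mul_inv, mul_inv]
    ring
  have h5 : HasDerivAt (fun s : ℝ => Real.exp (q / (4*(c - s))))
      (Real.exp (q/(4*(c-t))) * (q/4 * (-(-1)/(c-t)^2))) t := h4.exp
  have h6 : HasDerivAt (fun s => (c - s) ^ p * Real.exp (q / (4*(c - s)))) _ t := h2.mul h5
  convert h6 using 1
  have hrw : (c-t) ^ (p-1) = (c-t) ^ p / (c-t) := by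
    rw [Real.rpow_sub hu, Real.rpow_one]
  rw [hrw, hp]
  field_simp

-- second derivative of the line function of K
lemma K_line_deriv2 (A β b q : ℝ) :
    iteratedDeriv 2 (fun s => A * Real.exp (β * (q + 2*b*s + s^2))) 0
      = A * Real.exp (β * q) * (2*β + 4*β^2*b^2) := by
  have hP : ∀ s : ℝ, HasDerivAt (fun s : ℝ => β * (q + 2*b*s + s^2)) (β * (2*b + 2*s)) s := by
    intro s
    have h1 : HasDerivAt (fun s : ℝ => q + 2*b*s + s^2) (2*b + 2*s) s := by
      have := ((hasDerivAt_id s).const_mul (2*b)).const_add q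
      have h2 : HasDerivAt (fun s : ℝ => q + 2*b*s + s^2) _ s := this.add (hasDerivAt_pow 2 s)
      simpa using h2
    simpa using h1.const_mul β
  have hd : ∀ s : ℝ, HasDerivAt (fun s => A * Real.exp (β * (q + 2*b*s + s^2)))
      (A * Real.exp (β * (q + 2*b*s + s^2)) * (β * (2*b + 2*s))) s := by
    intro s
    have : HasDerivAt (fun s => A * Real.exp (β * (q + 2*b*s + s^2))) _ s := ((hP s).exp).const_mul A
    convert this using 1; ring
  have hderiv : deriv (fun s => A * Real.exp (β * (q + 2*b*s + s^2)))
      = fun s => A * Real.exp (β * (q + 2*b*s + s^2)) * (β * (2*b + 2*s)) := by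
    funext s; exact (hd s).deriv
  rw [iteratedDeriv_succ, iteratedDeriv_one, hderiv]
  have hd2 : HasDerivAt (fun s => A * Real.exp (β * (q + 2*b*s + s^2)) * (β * (2*b + 2*s)))
      ((A * Real.exp (β * (q + 2*b*0 + 0^2)) * (β * (2*b + 2*0))) * (β * (2*b + 2*0))
        + A * Real.exp (β * (q + 2*b*0 + 0^2)) * (β * 2)) 0 := by
    have hlin : HasDerivAt (fun s : ℝ => β * (2*b + 2*s)) (β * 2) 0 := by
      have := ((hasDerivAt_id (0:ℝ)).const_mul 2).const_add (2*b)
      simpa using this.const_mul β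
    exact (hd 0).mul hlin
  rw [hd2.deriv]
  norm_num
  ring


lemma euclid_norm_sq_eq (d : ℕ) (y : EuclideanSpace ℝ (Fin d)) : ‖y‖^2 = ∑ i, (y i)^2 := by
  rw [EuclideanSpace.norm_eq, Real.sq_sqrt (by positivity)]
  simp [Real.norm_eq_abs, sq_abs]

lemma iteratedDeriv2_sub {f g : ℝ → ℝ} (hf : ContDiff ℝ 2 f) (hg : ContDiff ℝ 2 g) (x : ℝ) :
    iteratedDeriv 2 (fun s => f s - g s) x = iteratedDeriv 2 f x - iteratedDeriv 2 g x := by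
  rw [← iteratedDerivWithin_univ (f := f), ← iteratedDerivWithin_univ (f := g),
    ← iteratedDerivWithin_univ]
  exact iteratedDerivWithin_sub (Set.mem_univ x) uniqueDiffOn_univ
    hf.contDiffWithinAt hg.contDiffWithinAt

lemma iteratedDeriv2_sub_const {f : ℝ → ℝ} (hf : ContDiff ℝ 2 f) (c₀ x : ℝ) :
    iteratedDeriv 2 (fun s => f s - c₀) x = iteratedDeriv 2 f x := by
  rw [iteratedDeriv2_sub hf contDiff_const x]
  have : iteratedDeriv 2 (fun _ : ℝ => c₀) x = 0 := by
    simp [iteratedDeriv_succ, iteratedDeriv_one]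
  rw [this, sub_zero]

/-- Coordinatewise Laplacian of a function on Euclidean space. -/
noncomputable def lap (d : ℕ) (f : EuclideanSpace ℝ (Fin d) → ℝ)
    (x : EuclideanSpace ℝ (Fin d)) : ℝ :=
  ∑ k : Fin d, iteratedDeriv 2 (fun s : ℝ => f (x + s • EuclideanSpace.single k (1:ℝ))) 0

lemma core (d : ℕ) (T : ℝ)
    (v : ℝ → EuclideanSpace ℝ (Fin d) → ℝ)
    (hvcont : ContinuousOn (fun p : ℝ × EuclideanSpace ℝ (Fin d) => v p.1 p.2)
      (Set.Icc 0 T ×ˢ Set.univ))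
    (hvsmooth : ∀ t ∈ Set.Ioc (0:ℝ) T, ∀ x : EuclideanSpace ℝ (Fin d),
      DifferentiableAt ℝ (fun s => v s x) t ∧ ContDiff ℝ 2 (v t))
    (hsub : ∀ t ∈ Set.Ioc (0:ℝ) T, ∀ x : EuclideanSpace ℝ (Fin d),
      deriv (fun s => v s x) t ≤ lap d (v t) x)
    (α C' : ℝ) (hα : 0 ≤ α) (hC' : 0 ≤ C')
    (hgr : ∀ t ∈ Set.Icc (0:ℝ) T, ∀ x : EuclideanSpace ℝ (Fin d),
      v t x ≤ C' * Real.exp (α * ‖x‖^2))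
    (M t₀ t₁ : ℝ) (ht₀ : 0 ≤ t₀) (ht01 : t₀ < t₁) (ht₁T : t₁ ≤ T)
    (hstep : t₁ ≤ t₀ + 1/(8*(2*α+1)))
    (hM : ∀ x, v t₀ x ≤ M) (x₀ : EuclideanSpace ℝ (Fin d)) :
    v t₁ x₀ ≤ M := by
  have h2α : (0:ℝ) < 2*α+1 := by linarith
  set τ : ℝ := 1/(4*(2*α+1)) with hτdef
  have hτ : 0 < τ := by positivity
  have hτhalf : t₁ ≤ t₀ + τ/2 := by
    have h : τ/2 = 1/(8*(2*α+1)) := by rw [hτdef]; field_simp; ring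
    linarith
  set c : ℝ := t₀ + τ with hcdef
  set K : ℝ → EuclideanSpace ℝ (Fin d) → ℝ :=
    fun t x => (c - t) ^ (-(d:ℝ)/2) * Real.exp (‖x - x₀‖^2 / (4*(c - t))) with hK
  have hpnp : (-(d:ℝ)/2) ≤ 0 := by
    have : (0:ℝ) ≤ (d:ℝ) := Nat.cast_nonneg d
    linarith
  have huIcc : ∀ t ∈ Icc t₀ t₁, τ/2 ≤ c - t ∧ c - t ≤ τ := by
    intro t ht
    constructor
    · have := ht.2; rw [hcdef]; linarith
    · have := ht.1; rw [hcdef]; linarith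
  have hKpos : ∀ t ∈ Icc t₀ t₁, ∀ x, 0 < K t x := by
    intro t ht x
    have h1 : 0 < c - t := lt_of_lt_of_le (by positivity) (huIcc t ht).1
    rw [hK]
    positivity
  have hτp : 0 < τ ^ (-(d:ℝ)/2) := Real.rpow_pos_of_pos hτ _
  -- main estimate
  have main : ∀ ε > 0, ∀ δ > 0, v t₁ x₀ ≤ M + ε * K t₁ x₀ + δ * (t₁ - t₀) := by
    intro ε hε δ hδ
    set C₁ : ℝ := C' * Real.exp (2*α*‖x₀‖^2) with hC₁
    have hC₁0 : 0 ≤ C₁ := by positivity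
    set L : ℝ := (C₁ - min M 0)/(ε * τ ^ (-(d:ℝ)/2)) with hL
    set R : ℝ := Real.sqrt (max L 0) with hRdef
    have hR0 : 0 ≤ R := Real.sqrt_nonneg _
    have hRbound : C₁ - ε * τ ^ (-(d:ℝ)/2) * Real.exp (R^2) ≤ min M 0 := by
      have hsq : R^2 = max L 0 := Real.sq_sqrt (le_max_right _ _)
      have h1 : L ≤ Real.exp (R^2) := by
        have := Real.add_one_le_exp (R^2)
        have h2 : L ≤ R^2 := hsq ▸ le_max_left _ _
        linarith
      have h3 : ε * τ ^ (-(d:ℝ)/2) * L = C₁ - min M 0 := by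
        rw [hL]; field_simp
      nlinarith [mul_le_mul_of_nonneg_left h1 (by positivity : (0:ℝ) ≤ ε * τ ^ (-(d:ℝ)/2))]
    set Q : Set (ℝ × EuclideanSpace ℝ (Fin d)) := Icc t₀ t₁ ×ˢ Metric.closedBall x₀ R with hQ
    set W : ℝ × EuclideanSpace ℝ (Fin d) → ℝ :=
      fun pt => v pt.1 pt.2 - ε * K pt.1 pt.2 - δ * (pt.1 - t₀) with hW
    have hQsub : Q ⊆ Icc 0 T ×ˢ (univ : Set (EuclideanSpace ℝ (Fin d))) := by
      rintro ⟨t, x⟩ ⟨ht, -⟩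
      exact ⟨⟨le_trans ht₀ ht.1, le_trans ht.2 ht₁T⟩, mem_univ _⟩
    have hQc : IsCompact Q := isCompact_Icc.prod (isCompact_closedBall _ _)
    have hQne : Q.Nonempty := ⟨(t₀, x₀), ⟨le_refl _, ht01.le⟩, Metric.mem_closedBall_self hR0⟩
    have hWcont : ContinuousOn W Q := by
      have hbpos : ∀ pt ∈ Q, 0 < c - pt.1 := fun pt hpt =>
        lt_of_lt_of_le (by positivity) (huIcc pt.1 hpt.1).1
      have hbase : ContinuousOn (fun pt : ℝ × EuclideanSpace ℝ (Fin d) => c - pt.1) Q :=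
        (continuous_const.sub continuous_fst).continuousOn
      have hKcont : ContinuousOn (fun pt : ℝ × EuclideanSpace ℝ (Fin d) => K pt.1 pt.2) Q := by
        simp only [hK]
        refine ContinuousOn.mul
          (hbase.rpow_const (fun pt hpt => Or.inl (hbpos pt hpt).ne')) ?_
        refine Real.continuous_exp.comp_continuousOn ?_
        refine ContinuousOn.div ?_ ?_ ?_
        · exact (((continuous_snd.sub continuous_const).norm.pow 2)).continuousOn
        · exact (continuous_const.mul (continuous_const.sub continuous_fst)).continuousOn
        · intro pt hpt
          have := hbpos pt hpt
          positivity
      refine ((hvcont.mono hQsub).sub (ContinuousOn.mul continuousOn_const hKcont)).sub ?_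
      exact (continuous_const.mul (continuous_fst.sub continuous_const)).continuousOn
    obtain ⟨⟨ts, xs⟩, hmem, hmax⟩ := hQc.exists_isMaxOn hQne hWcont
    have hts : ts ∈ Icc t₀ t₁ := hmem.1
    have hxs : ‖xs - x₀‖ ≤ R := by
      have := hmem.2
      rwa [Metric.mem_closedBall, dist_eq_norm] at this
    have hWle : W (t₁, x₀) ≤ W (ts, xs) :=
      hmax ⟨⟨ht01.le, le_refl _⟩, Metric.mem_closedBall_self hR0⟩
    have hWM : W (ts, xs) ≤ M := by
      rcases eq_or_lt_of_le hts.1 with h0 | hlt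
      · -- initial time
        show v ts xs - ε * K ts xs - δ * (ts - t₀) ≤ M
        have h1 := hKpos ts hts xs
        have h2 : v ts xs ≤ M := by rw [← h0]; exact hM xs
        have h3 : ts - t₀ = 0 := by rw [← h0]; ring
        rw [h3]
        nlinarith
      rcases eq_or_lt_of_le hxs with hR | hRlt
      · -- spatial boundary
        have htsIcc : ts ∈ Icc (0:ℝ) T := ⟨le_trans ht₀ hts.1, le_trans hts.2 ht₁T⟩
        have hu1 : τ/2 ≤ c - ts := (huIcc ts hts).1
        have hu2 : c - ts ≤ τ := (huIcc ts hts).2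
        have hupos : 0 < c - ts := lt_of_lt_of_le (by positivity) hu1
        have hxnorm : ‖xs‖ ≤ ‖x₀‖ + R := by
          calc ‖xs‖ = ‖x₀ + (xs - x₀)‖ := by rw [add_sub_cancel]
          _ ≤ ‖x₀‖ + ‖xs - x₀‖ := norm_add_le _ _
          _ = ‖x₀‖ + R := by rw [hR]
        have hxsq : α * ‖xs‖^2 ≤ 2*α*‖x₀‖^2 + 2*α*R^2 := by
          have h7 : ‖xs‖^2 ≤ (‖x₀‖+R)^2 := by nlinarith [norm_nonneg xs]
          nlinarith [mul_le_mul_of_nonneg_left h7 hα, sq_nonneg (‖x₀‖-R)]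
        have hv : v ts xs ≤ C₁ * Real.exp (2*α*R^2) := by
          calc v ts xs ≤ C' * Real.exp (α*‖xs‖^2) := hgr ts htsIcc xs
          _ ≤ C' * Real.exp (2*α*‖x₀‖^2 + 2*α*R^2) :=
              mul_le_mul_of_nonneg_left (Real.exp_le_exp.mpr hxsq) hC'
          _ = C₁ * Real.exp (2*α*R^2) := by rw [hC₁, Real.exp_add]; ring
        have hKlb : τ ^ (-(d:ℝ)/2) * Real.exp ((2*α+1)*R^2) ≤ K ts xs := by
          rw [hK]
          have h1 : τ ^ (-(d:ℝ)/2) ≤ (c - ts) ^ (-(d:ℝ)/2) :=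
            Real.rpow_le_rpow_of_nonpos hupos hu2 hpnp
          have h2 : (2*α+1)*R^2 ≤ ‖xs - x₀‖^2 / (4*(c-ts)) := by
            rw [hR]
            have h3 : R^2/(4*τ) ≤ R^2/(4*(c-ts)) :=
              div_le_div_of_nonneg_left (sq_nonneg R) (by positivity) (by linarith)
            have h4 : R^2/(4*τ) = (2*α+1)*R^2 := by rw [hτdef]; field_simp
            linarith
          calc τ ^ (-(d:ℝ)/2) * Real.exp ((2*α+1)*R^2)
              ≤ τ ^ (-(d:ℝ)/2) * Real.exp (‖xs-x₀‖^2/(4*(c-ts))) :=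
                mul_le_mul_of_nonneg_left (Real.exp_le_exp.mpr h2) hτp.le
          _ ≤ (c-ts) ^ (-(d:ℝ)/2) * Real.exp (‖xs-x₀‖^2/(4*(c-ts))) :=
                mul_le_mul_of_nonneg_right h1 (Real.exp_pos _).le
        show v ts xs - ε * K ts xs - δ * (ts - t₀) ≤ M
        have hδ0 : 0 ≤ δ*(ts - t₀) := mul_nonneg hδ.le (by linarith [hts.1])
        have hexp : Real.exp ((2*α+1)*R^2) = Real.exp (2*α*R^2) * Real.exp (R^2) := by
          rw [← Real.exp_add]; ring_nf
        have key : v ts xs - ε * K ts xs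
            ≤ Real.exp (2*α*R^2) * (C₁ - ε*τ ^ (-(d:ℝ)/2)*Real.exp (R^2)) := by
          have h5 := mul_le_mul_of_nonneg_left hKlb hε.le
          rw [hexp] at h5
          nlinarith [hv]
        have h1exp : (1:ℝ) ≤ Real.exp (2*α*R^2) := Real.one_le_exp (by positivity)
        have hmin : min M 0 ≤ 0 := min_le_right _ _
        have h6 := mul_le_mul_of_nonneg_left hRbound (Real.exp_pos (2*α*R^2)).le
        nlinarith [min_le_left M 0]
      · -- interior: contradiction
        exfalso
        have htsI : ts ∈ Ioc (0:ℝ) T := ⟨lt_of_le_of_lt ht₀ hlt, le_trans hts.2 ht₁T⟩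
        have hu1 : τ/2 ≤ c - ts := (huIcc ts hts).1
        have hupos : 0 < c - ts := lt_of_lt_of_le (by positivity) hu1
        have hune : c - ts ≠ 0 := hupos.ne'
        -- notation
        have hvsm := hvsmooth ts htsI
        -- (a) time derivative at the max
        have hδd : HasDerivAt (fun s : ℝ => δ*(s - t₀)) δ ts := by
          simpa using ((hasDerivAt_id ts).sub_const t₀).const_mul δ
        have hvd : HasDerivAt (fun s => v s xs) (deriv (fun s => v s xs) ts) ts :=
          ((hvsm xs).1).hasDerivAt
        have hKd : HasDerivAt (fun s => K s xs)
            ((c-ts) ^ (-(d:ℝ)/2) * Real.exp (‖xs - x₀‖^2/(4*(c-ts))) *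
              ((d:ℝ)/(2*(c-ts)) + ‖xs - x₀‖^2/(4*(c-ts)^2))) ts := by
          have h := K_time_hasDerivAt d c (‖xs - x₀‖^2) ts (by linarith)
          rw [hK]
          exact h
        have hfd : HasDerivAt (fun s => v s xs - ε * K s xs - δ*(s - t₀))
            (deriv (fun s => v s xs) ts
              - ε * ((c-ts) ^ (-(d:ℝ)/2) * Real.exp (‖xs - x₀‖^2/(4*(c-ts))) *
                  ((d:ℝ)/(2*(c-ts)) + ‖xs - x₀‖^2/(4*(c-ts)^2)))
              - δ) ts := (hvd.sub (hKd.const_mul ε)).sub hδd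
        have hmaxt : ∀ s ∈ Icc t₀ ts, (fun s => v s xs - ε * K s xs - δ*(s - t₀)) s
            ≤ (fun s => v s xs - ε * K s xs - δ*(s - t₀)) ts := by
          intro s hs
          have hmem' : (s, xs) ∈ Q :=
            ⟨⟨hs.1, le_trans hs.2 hts.2⟩,
              Metric.mem_closedBall.mpr (by rw [dist_eq_norm]; linarith)⟩
          exact hmax hmem'
        have h0le : 0 ≤ deriv (fun s => v s xs - ε * K s xs - δ*(s - t₀)) ts :=
          deriv_nonneg_of_max_left hlt hfd.differentiableAt hmaxt
        rw [hfd.deriv] at h0le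
        -- (b) spatial second derivatives
        have hkey : ∀ k : Fin d,
            iteratedDeriv 2 (fun s : ℝ => v ts (xs + s • EuclideanSpace.single k (1:ℝ))) 0
              ≤ ε * ((c-ts) ^ (-(d:ℝ)/2) * Real.exp ((1/(4*(c-ts)))*‖xs - x₀‖^2) *
                  (2*(1/(4*(c-ts))) + 4*(1/(4*(c-ts)))^2*((xs - x₀) k)^2)) := by
          intro k
          have hgKeq : (fun s : ℝ => ε * K ts (xs + s • EuclideanSpace.single k (1:ℝ)))
              = fun s => (ε*((c-ts) ^ (-(d:ℝ)/2))) *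
                  Real.exp ((1/(4*(c-ts))) *
                    (‖xs - x₀‖^2 + 2*((xs - x₀) k)*s + s^2)) := by
            funext s
            rw [hK]
            have h1 : xs + s • EuclideanSpace.single k (1:ℝ) - x₀
                = (xs - x₀) + s • EuclideanSpace.single k (1:ℝ) := by
              abel
            simp only []
            rw [h1, norm_line_sq]
            rw [div_eq_mul_inv, one_div, mul_comm ((4*(c-ts))⁻¹) _, ← div_eq_mul_inv]
            ring
          have hd2K := K_line_deriv2 (ε*((c-ts) ^ (-(d:ℝ)/2))) (1/(4*(c-ts)))
            ((xs - x₀) k) (‖xs - x₀‖^2)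
          rw [← hgKeq] at hd2K
          -- local max along the line
          have hr : 0 < R - ‖xs - x₀‖ := by linarith
          have hloc : IsLocalMax (fun s : ℝ =>
              v ts (xs + s • EuclideanSpace.single k (1:ℝ))
                - ε * K ts (xs + s • EuclideanSpace.single k (1:ℝ)) - δ*(ts - t₀)) 0 := by
            rw [IsLocalMax, IsMaxFilter, Metric.eventually_nhds_iff]
            refine ⟨R - ‖xs - x₀‖, hr, fun s hs => ?_⟩
            have hball : xs + s • EuclideanSpace.single k (1:ℝ) ∈ Metric.closedBall x₀ R := by
              rw [Metric.mem_closedBall, dist_eq_norm]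
              have h2 : xs + s • EuclideanSpace.single k (1:ℝ) - x₀
                  = (xs - x₀) + s • EuclideanSpace.single k (1:ℝ) := by abel
              rw [h2]
              have h3 : ‖(xs - x₀) + s • EuclideanSpace.single k (1:ℝ)‖
                  ≤ ‖xs - x₀‖ + ‖s • EuclideanSpace.single k (1:ℝ)‖ := norm_add_le _ _
              have h4 : ‖s • EuclideanSpace.single k (1:ℝ)‖ = |s| := by
                rw [norm_smul, EuclideanSpace.norm_single]
                simp [Real.norm_eq_abs]
              rw [Real.dist_eq, sub_zero] at hs
              rw [h4] at h3
              linarith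
            have hmem' : (ts, xs + s • EuclideanSpace.single k (1:ℝ)) ∈ Q := ⟨hts, hball⟩
            have := hmax hmem'
            rw [hW] at this
            simpa using this
          -- regularity of the line functions
          have hline : ContDiff ℝ 2 (fun s : ℝ => xs + s • EuclideanSpace.single k (1:ℝ)) := by
            fun_prop
          have hgv2 : ContDiff ℝ 2
              (fun s : ℝ => v ts (xs + s • EuclideanSpace.single k (1:ℝ))) :=
            (hvsm xs).2.comp hline
          have hgK2 : ContDiff ℝ 2
              (fun s : ℝ => ε * K ts (xs + s • EuclideanSpace.single k (1:ℝ))) := by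
            rw [hgKeq]; fun_prop
          have hg2 : ContDiff ℝ 2 (fun s : ℝ =>
              v ts (xs + s • EuclideanSpace.single k (1:ℝ))
                - ε * K ts (xs + s • EuclideanSpace.single k (1:ℝ))) := hgv2.sub hgK2
          have hnonpos := iteratedDeriv_two_nonpos_of_isLocalMax (hg2.sub contDiff_const) hloc
          have hsplit1 : iteratedDeriv 2 (fun s : ℝ =>
              v ts (xs + s • EuclideanSpace.single k (1:ℝ))
                - ε * K ts (xs + s • EuclideanSpace.single k (1:ℝ)) - δ*(ts - t₀)) 0
              = iteratedDeriv 2 (fun s : ℝ =>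
                  v ts (xs + s • EuclideanSpace.single k (1:ℝ))
                    - ε * K ts (xs + s • EuclideanSpace.single k (1:ℝ))) 0 :=
            iteratedDeriv2_sub_const hg2 _ 0
          have hsplit2 := iteratedDeriv2_sub hgv2 hgK2 0
          rw [hsplit1, hsplit2, hd2K] at hnonpos
          have hrw : Real.exp ((1/(4*(c-ts))) * ‖xs - x₀‖^2)
              = Real.exp (‖xs - x₀‖^2 * (1/(4*(c-ts)))) := by rw [mul_comm]
          linarith [hnonpos]
        -- sum over coordinates
        have hsum : lap d (v ts) xs
            ≤ ε * ((c-ts) ^ (-(d:ℝ)/2) * Real.exp ((1/(4*(c-ts)))*‖xs - x₀‖^2) *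
                (2*(d:ℝ)*(1/(4*(c-ts))) + 4*(1/(4*(c-ts)))^2*‖xs - x₀‖^2)) := by
          have h8 : lap d (v ts) xs ≤ ∑ k : Fin d,
              ε * ((c-ts) ^ (-(d:ℝ)/2) * Real.exp ((1/(4*(c-ts)))*‖xs - x₀‖^2) *
                (2*(1/(4*(c-ts))) + 4*(1/(4*(c-ts)))^2*((xs - x₀) k)^2)) :=
            Finset.sum_le_sum (fun k _ => hkey k)
          have h9 : ∑ k : Fin d,
              ε * ((c-ts) ^ (-(d:ℝ)/2) * Real.exp ((1/(4*(c-ts)))*‖xs - x₀‖^2) *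
                (2*(1/(4*(c-ts))) + 4*(1/(4*(c-ts)))^2*((xs - x₀) k)^2))
              = ε * ((c-ts) ^ (-(d:ℝ)/2) * Real.exp ((1/(4*(c-ts)))*‖xs - x₀‖^2) *
                (2*(d:ℝ)*(1/(4*(c-ts))) + 4*(1/(4*(c-ts)))^2*‖xs - x₀‖^2)) := by
            rw [euclid_norm_sq_eq d (xs - x₀)]
            have h10 : ∀ k : Fin d, ε * ((c-ts) ^ (-(d:ℝ)/2) *
                Real.exp ((1/(4*(c-ts)))*∑ i, ((xs-x₀) i)^2) *
                (2*(1/(4*(c-ts))) + 4*(1/(4*(c-ts)))^2*((xs - x₀) k)^2))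
              = (ε * ((c-ts) ^ (-(d:ℝ)/2) *
                  Real.exp ((1/(4*(c-ts)))*∑ i, ((xs-x₀) i)^2))) *
                (2*(1/(4*(c-ts))) + 4*(1/(4*(c-ts)))^2*((xs - x₀) k)^2) := fun k => by ring
            simp_rw [h10]
            rw [← Finset.mul_sum, Finset.sum_add_distrib, Finset.sum_const, Finset.card_univ,
              Fintype.card_fin, ← Finset.mul_sum, nsmul_eq_mul]
            ring
          rw [h9] at h8
          exact h8
        -- (c) combine
        have hsubts := hsub ts htsI xs
        have hfactor : (d:ℝ)/(2*(c-ts)) + ‖xs - x₀‖^2/(4*(c-ts)^2)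
            = 2*(d:ℝ)*(1/(4*(c-ts))) + 4*(1/(4*(c-ts)))^2*‖xs - x₀‖^2 := by
          field_simp
          ring
        have hexpeq : Real.exp (‖xs - x₀‖^2/(4*(c-ts)))
            = Real.exp ((1/(4*(c-ts)))*‖xs - x₀‖^2) := by
          congr 1
          field_simp
        rw [hfactor, hexpeq] at h0le
        linarith
    have := hWle.trans hWM
    rw [hW] at this
    simp only at this
    linarith
  -- conclude
  have ht₁I : t₁ ∈ Icc t₀ t₁ := ⟨ht01.le, le_refl _⟩
  have hu₁ : τ/2 ≤ c - t₁ := (huIcc t₁ ht₁I).1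
  have hKb : K t₁ x₀ ≤ (τ/2) ^ (-(d:ℝ)/2) := by
    rw [hK]
    simp only [sub_self, norm_zero]
    norm_num
    exact Real.rpow_le_rpow_of_nonpos (by positivity) hu₁ hpnp
  have hKb0 : 0 < K t₁ x₀ := hKpos t₁ ht₁I x₀
  set B : ℝ := (τ/2) ^ (-(d:ℝ)/2) + τ with hB
  have hB0 : 0 < B := by
    have h1 : (0:ℝ) < (τ/2) ^ (-(d:ℝ)/2) := Real.rpow_pos_of_pos (by positivity) _
    rw [hB]; linarith
  refine le_of_forall_pos_le_add (fun ε' hε' => ?_)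
  have hεB : 0 < ε'/B := by positivity
  have h := main (ε'/B) hεB (ε'/B) hεB
  have ht₁τ : t₁ - t₀ ≤ τ := by linarith
  have hBe : (ε'/B) * ((τ/2) ^ (-(d:ℝ)/2) + τ) = ε' := by
    field_simp
    rw [hB, neg_div]
  have hfin : (ε'/B) * K t₁ x₀ + (ε'/B)*(t₁ - t₀) ≤ ε' := by
    nlinarith [hKb, ht₁τ, hεB, hKb0]
  linarith

theorem heat_equation_maximum_principle (d : ℕ) (T : ℝ) (hT : 0 < T)
    (v : ℝ → EuclideanSpace ℝ (Fin d) → ℝ)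
    (hvcont : ContinuousOn (fun p : ℝ × EuclideanSpace ℝ (Fin d) => v p.1 p.2)
      (Set.Icc 0 T ×ˢ Set.univ))
    (hvsmooth : ∀ t ∈ Set.Ioc (0:ℝ) T, ∀ x : EuclideanSpace ℝ (Fin d),
      DifferentiableAt ℝ (fun s => v s x) t ∧ ContDiff ℝ 2 (v t))
    (hsub : ∀ t ∈ Set.Ioc (0:ℝ) T, ∀ x : EuclideanSpace ℝ (Fin d),
      deriv (fun s => v s x) t ≤ lap d (v t) x)
    (hgrowth : ∃ a C : ℝ, ∀ t ∈ Set.Icc (0:ℝ) T, ∀ x : EuclideanSpace ℝ (Fin d),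
      Real.exp (a * ‖x‖ ^ 2) * v t x ≤ C) :
    (⨆ t ∈ Set.Icc (0:ℝ) T, ⨆ x : EuclideanSpace ℝ (Fin d), (v t x : EReal))
      = ⨆ x : EuclideanSpace ℝ (Fin d), (v 0 x : EReal) := by
  obtain ⟨a, C, hgrow⟩ := hgrowth
  set α : ℝ := max (-a) 0 with hαdef
  set C' : ℝ := max C 0 with hC'def
  have hα0 : 0 ≤ α := le_max_right _ _
  have hC'0 : 0 ≤ C' := le_max_right _ _
  have hgr : ∀ t ∈ Set.Icc (0:ℝ) T, ∀ x, v t x ≤ C' * Real.exp (α*‖x‖^2) := by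
    intro t ht x
    have h1 := hgrow t ht x
    have hexp : 0 < Real.exp (a*‖x‖^2) := Real.exp_pos _
    have h2 : v t x ≤ C * Real.exp (-(a*‖x‖^2)) := by
      rw [Real.exp_neg, mul_comm C, ← div_eq_inv_mul, le_div_iff₀ hexp, mul_comm]
      exact h1
    have h3 : Real.exp (-(a*‖x‖^2)) ≤ Real.exp (α*‖x‖^2) := by
      apply Real.exp_le_exp.mpr
      have h4 : -a ≤ α := le_max_left _ _
      nlinarith [sq_nonneg ‖x‖]
    rcases le_or_gt C 0 with hC | hC
    · have h5 : C * Real.exp (-(a*‖x‖^2)) ≤ 0 :=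
        mul_nonpos_of_nonpos_of_nonneg hC (Real.exp_pos _).le
      have h6 : 0 ≤ C' * Real.exp (α*‖x‖^2) := by positivity
      linarith
    · calc v t x ≤ C * Real.exp (-(a*‖x‖^2)) := h2
      _ ≤ C * Real.exp (α*‖x‖^2) := mul_le_mul_of_nonneg_left h3 hC.le
      _ ≤ C' * Real.exp (α*‖x‖^2) :=
          mul_le_mul_of_nonneg_right (le_max_left _ _) (Real.exp_pos _).le
  have step := core d T v hvcont hvsmooth hsub α C' hα0 hC'0 hgr
  have key : ∀ (M : ℝ), (∀ x, v 0 x ≤ M) → ∀ t ∈ Set.Icc (0:ℝ) T, ∀ x, v t x ≤ M := by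
    intro M hM0
    set hstep : ℝ := 1/(8*(2*α+1)) with hh
    have hh0 : 0 < hstep := by positivity
    have ind : ∀ n : ℕ, ∀ t ∈ Set.Icc (0:ℝ) T, t ≤ n * hstep → ∀ x, v t x ≤ M := by
      intro n
      induction n with
      | zero =>
        intro t ht h0 x
        have : t = 0 := le_antisymm (by simpa using h0) ht.1
        rw [this]; exact hM0 x
      | succ n ih =>
        intro t ht hle x
        rcases le_or_gt t (n * hstep) with h1 | h1
        · exact ih t ht h1 x
        · have ht₀ : (0:ℝ) ≤ n*hstep := by positivity
          have ht₀T : (n:ℝ)*hstep < T := lt_of_lt_of_le h1 ht.2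
          have hMn : ∀ y, v ((n:ℝ)*hstep) y ≤ M :=
            fun y => ih ((n:ℝ)*hstep) ⟨ht₀, ht₀T.le⟩ (le_refl _) y
          refine step M ((n:ℝ)*hstep) t ht₀ h1 ht.2 ?_ hMn x
          push_cast at hle
          rw [hh]
          linarith
    intro t ht x
    obtain ⟨n, hn⟩ := exists_nat_ge (t/hstep)
    have h2 : t ≤ n*hstep := by
      rw [div_le_iff₀ hh0] at hn; linarith
    exact ind n t ht h2 x
  apply le_antisymm
  · refine iSup₂_le fun t ht => iSup_le fun x => ?_
    by_cases hbdd : BddAbove (Set.range (v 0))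
    · have hne : (Set.range (v 0)).Nonempty := ⟨v 0 0, ⟨0, rfl⟩⟩
      set M : ℝ := sSup (Set.range (v 0)) with hMdef
      have hM0 : ∀ y, v 0 y ≤ M := fun y => le_csSup hbdd ⟨y, rfl⟩
      have hvtx : v t x ≤ M := key M hM0 t ht x
      by_contra hcon
      push_neg at hcon
      have hltM : (⨆ y : EuclideanSpace ℝ (Fin d), (v 0 y : EReal)) < (M : EReal) :=
        lt_of_lt_of_le hcon (by exact_mod_cast hvtx)
      obtain ⟨r, hr1, hr2⟩ := EReal.exists_between_coe_real hltM
      obtain ⟨z, ⟨y, rfl⟩, hz⟩ := exists_lt_of_lt_csSup hne (by exact_mod_cast hr2)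
      have : (r : EReal) < (v 0 y : EReal) := by exact_mod_cast hz
      have h7 : (v 0 y : EReal) ≤ ⨆ y : EuclideanSpace ℝ (Fin d), (v 0 y : EReal) :=
        le_iSup (fun y : EuclideanSpace ℝ (Fin d) => (v 0 y : EReal)) y
      exact absurd (this.trans_le h7) (not_lt.mpr hr1.le)
    · have htop : (⨆ y : EuclideanSpace ℝ (Fin d), (v 0 y : EReal)) = ⊤ := by
        rw [iSup_eq_top]
        intro b hb
        obtain ⟨r, hr1, -⟩ := EReal.exists_between_coe_real hb
        obtain ⟨z, ⟨y, rfl⟩, hz⟩ := not_bddAbove_iff.mp hbdd r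
        exact ⟨y, hr1.trans (by exact_mod_cast hz)⟩
      rw [htop]
      exact le_top
  · exact le_iSup₂_of_le 0 ⟨le_refl _, hT.le⟩ (le_refl _)
end

section
/- Let u : [0,T] × ℝ^d → ℝ be a classical solution of the backward PDE ∂_t u(t,x) + (1/2) Δ_x u(t,x) + f(t,x,u(t,x)) = 0 on [0,T) × ℝ^d with continuous extension to [0,T], where y f(t,x,y) ≤ c(1+y²), and satisfying a Gaussian growth bound inf_{a∈ℝ} sup_{(s,y)} e^{a‖y‖²}|u(s,y)| < ∞. Then for every t ∈ [0,T]: sup_{x ∈ ℝ^d} |u(t,x)| ≤ e^{c(T-t)} (1 + sup_{x ∈ ℝ^d} |u(T,x)|²)^{1/2}. -/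
/-!
Put `v s x = exp (2c (s - T)) * (1 + u s x ^ 2)`. The coercivity of `f` together with
`2 u Δu ≤ Δ(u²)` makes `v` a subsolution of the backward heat equation, `∂ₛv + ½Δv ≥ 0`, and the
growth hypothesis (a seminorm is dominated by the Euclidean norm) gives `v ≤ A exp (β ‖x‖²)`.
On a time strip of length at most `1 / (8β)` such a `v` obeys the maximum principle: `v - ε H`
cannot have a maximum above `sup v(t₂, ·)` before the final time, because the barrier
`H s x = exp (η (t₂ - s) + ‖x‖² / (2 (s - s₀)))` satisfies `∂ₛH + ½ΔH < 0` and outgrows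
`exp (β ‖x‖²)`. Letting `ε → 0` and iterating over strips gives `v t ≤ 1 + sup u(T, ·)²`.
-/

open scoped ENNReal

open Real Set Filter Topology

local notation "ℝ^" d:max => EuclideanSpace ℝ (Fin d)

lemma iteratedDeriv_two_eq_deriv_deriv (f : ℝ → ℝ) : iteratedDeriv 2 f = deriv (deriv f) := by
  rw [iteratedDeriv_succ, iteratedDeriv_one]

lemma deriv_nonpos_of_isMaxOn_Icc {f : ℝ → ℝ} {a b : ℝ} (hab : a < b)
    (hf : DifferentiableAt ℝ f a) (hmax : IsMaxOn f (Icc a b) a) : deriv f a ≤ 0 := by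
  have hb : b - a ∈ posTangentConeAt (Icc a b) a :=
    sub_mem_posTangentConeAt_of_segment_subset (segment_eq_Icc hab.le).subset
  have := hmax.localize.hasFDerivWithinAt_nonpos hf.hasDerivAt.hasFDerivAt.hasFDerivWithinAt hb
  simp only [ContinuousLinearMap.toSpanSingleton_apply, smul_eq_mul] at this
  exact nonpos_of_mul_nonpos_right this (sub_pos.2 hab)

lemma IsLocalMax.iteratedDeriv_two_nonpos {f : ℝ → ℝ} {a : ℝ} (hmax : IsLocalMax f a)
    (hf : ContinuousAt f a) : iteratedDeriv 2 f a ≤ 0 := by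
  rw [iteratedDeriv_two_eq_deriv_deriv]
  by_contra! hpos
  have hmin := isLocalMin_of_deriv_deriv_pos hpos hmax.deriv_eq_zero hf
  have hconst : f =ᶠ[𝓝 a] fun _ => f a := by
    filter_upwards [hmax, hmin] with x h₁ h₂ using le_antisymm h₁ h₂
  have : deriv f =ᶠ[𝓝 a] fun _ => 0 := by
    filter_upwards [hconst.eventuallyEq_nhds] with x hx
    rw [hx.deriv_eq, deriv_const]
  rw [this.deriv_eq, deriv_const] at hpos
  exact lt_irrefl _ hpos

lemma iteratedDeriv_two_exp_quadratic (p q r : ℝ) :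
    iteratedDeriv 2 (fun m : ℝ => exp (p + q * m + r * m ^ 2)) 0 = (q ^ 2 + 2 * r) * exp p := by
  have hd : ∀ m : ℝ, HasDerivAt (fun m : ℝ => exp (p + q * m + r * m ^ 2))
      ((q + 2 * r * m) * exp (p + q * m + r * m ^ 2)) m := fun m => by
    convert (((hasDerivAt_id' m).const_mul q).const_add p |>.fun_add
      ((hasDerivAt_pow 2 m).const_mul r)).exp using 1
    simp only [mul_one, Nat.cast_ofNat, Nat.add_one_sub_one, pow_one]
    ring
  rw [iteratedDeriv_two_eq_deriv_deriv, funext fun m => (hd m).deriv]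
  have := (((hasDerivAt_id' (0:ℝ)).const_mul (2 * r)).const_add q).fun_mul (hd 0)
  rw [this.deriv]
  simp only [mul_one, mul_zero, add_zero, ne_eq, OfNat.ofNat_ne_zero, not_false_eq_true, zero_pow]
  ring

lemma iteratedDeriv_two_sq {g : ℝ → ℝ} (hg : ContDiff ℝ 2 g) (a : ℝ) :
    iteratedDeriv 2 (fun m => g m ^ 2) a = 2 * deriv g a ^ 2 + 2 * g a * iteratedDeriv 2 g a := by
  have hg₁ : Differentiable ℝ g := hg.differentiable two_ne_zero
  have hg₂ : Differentiable ℝ (deriv g) := (hg.iterate_deriv' 1 1).differentiable one_ne_zero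
  have hd : deriv (fun m => g m ^ 2) = fun m => 2 * g m * deriv g m := funext fun m => by
    rw [((hg₁ m).hasDerivAt.fun_pow 2).deriv]; ring
  rw [iteratedDeriv_two_eq_deriv_deriv, iteratedDeriv_two_eq_deriv_deriv, hd,
    (((hg₁ a).hasDerivAt.const_mul 2).fun_mul (hg₂ a).hasDerivAt).deriv]
  ring

section Laplacian

variable {d : ℕ}

lemma ContDiff.comp_line {g : ℝ^d → ℝ} (hg : ContDiff ℝ 2 g) (x v : ℝ^d) :
    ContDiff ℝ 2 (fun m : ℝ => g (x + m • v)) :=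
  hg.comp (contDiff_const.add (contDiff_id.smul contDiff_const))

lemma lap_sub {f g : ℝ^d → ℝ} (hf : ContDiff ℝ 2 f) (hg : ContDiff ℝ 2 g) (x : ℝ^d) :
    lap d (fun y => f y - g y) x = lap d f x - lap d g x := by
  simp only [lap, ← Finset.sum_sub_distrib]
  exact Finset.sum_congr rfl fun k _ =>
    iteratedDeriv_fun_sub ((hf.comp_line _ _).contDiffAt) ((hg.comp_line _ _).contDiffAt)

lemma lap_const_mul (a : ℝ) (g : ℝ^d → ℝ) (x : ℝ^d) :
    lap d (fun y => a * g y) x = a * lap d g x := by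
  simp only [lap, Finset.mul_sum, iteratedDeriv_const_mul_field]

lemma lap_const_add (a : ℝ) (g : ℝ^d → ℝ) (x : ℝ^d) :
    lap d (fun y => a + g y) x = lap d g x := by
  simp only [lap, iteratedDeriv_const_add two_pos]

lemma IsLocalMax.lap_nonpos {g : ℝ^d → ℝ} {x : ℝ^d} (hmax : IsLocalMax g x)
    (hg : Continuous g) : lap d g x ≤ 0 := by
  refine Finset.sum_nonpos fun k _ => IsLocalMax.iteratedDeriv_two_nonpos ?_ ?_
  · have hmax₀ : IsLocalMax g (x + (0:ℝ) • EuclideanSpace.single k (1:ℝ)) := by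
      rwa [zero_smul, add_zero]
    exact hmax₀.comp_continuous (g := fun m : ℝ => x + m • EuclideanSpace.single k (1:ℝ))
      (by fun_prop)
  · exact (hg.comp (by fun_prop)).continuousAt

lemma two_mul_lap_le_lap_sq {g : ℝ^d → ℝ} (hg : ContDiff ℝ 2 g) (x : ℝ^d) :
    2 * g x * lap d g x ≤ lap d (fun y => g y ^ 2) x := by
  simp only [lap, Finset.mul_sum]
  refine Finset.sum_le_sum fun k _ => ?_
  rw [iteratedDeriv_two_sq (hg.comp_line _ _)]
  simp only [zero_smul, add_zero]
  nlinarith [sq_nonneg (deriv (fun m : ℝ => g (x + m • EuclideanSpace.single k (1:ℝ))) 0)]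

lemma norm_add_smul_single_sq (x : ℝ^d) (k : Fin d) (m : ℝ) :
    ‖x + m • EuclideanSpace.single k (1:ℝ)‖ ^ 2 = ‖x‖ ^ 2 + 2 * x k * m + m ^ 2 := by
  simp only [norm_add_sq_real, inner_smul_right, EuclideanSpace.inner_single_right,
    conj_trivial, one_mul, norm_smul, norm_eq_abs, PiLp.norm_single, norm_one, mul_one, sq_abs]
  ring

lemma sum_sq_apply_eq_norm_sq (x : ℝ^d) : ∑ k, x k ^ 2 = ‖x‖ ^ 2 := by
  simp [EuclideanSpace.norm_sq_eq]

lemma lap_exp_add_sq_norm_div (a q : ℝ) (x : ℝ^d) :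
    lap d (fun y => exp (a + ‖y‖ ^ 2 / q)) x
      = (2 * d / q + 4 * ‖x‖ ^ 2 / q ^ 2) * exp (a + ‖x‖ ^ 2 / q) := by
  have hline : ∀ k : Fin d, (fun m : ℝ => exp (a + ‖x + m • EuclideanSpace.single k (1:ℝ)‖ ^ 2 / q))
      = fun m => exp ((a + ‖x‖ ^ 2 / q) + (2 * x k / q) * m + q⁻¹ * m ^ 2) := fun k => by
    funext m; rw [norm_add_smul_single_sq]; ring_nf
  simp only [lap, hline, iteratedDeriv_two_exp_quadratic, ← Finset.sum_mul, Finset.sum_add_distrib,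
    div_pow, ← Finset.sum_div, mul_pow, ← Finset.mul_sum, sum_sq_apply_eq_norm_sq,
    Finset.sum_const, Finset.card_univ, Fintype.card_fin, nsmul_eq_mul]
  ring

end Laplacian

section Barrier

variable {d : ℕ} (η s₀ t₂ : ℝ)

noncomputable def heatBarrier (s : ℝ) (x : ℝ^d) : ℝ := exp (η * (t₂ - s) + ‖x‖ ^ 2 / (2 * (s - s₀)))

lemma heatBarrier_pos (s : ℝ) (x : ℝ^d) : 0 < heatBarrier η s₀ t₂ s x := exp_pos _

lemma continuousOn_heatBarrier :
    ContinuousOn (fun p : ℝ × ℝ^d => heatBarrier η s₀ t₂ p.1 p.2) (Ioi s₀ ×ˢ univ) := by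
  refine continuous_exp.comp_continuousOn (ContinuousOn.add (by fun_prop) ?_)
  exact ContinuousOn.div (by fun_prop) (by fun_prop) fun p hp => by
    have : s₀ < p.1 := hp.1
    positivity

lemma contDiff_heatBarrier (s : ℝ) : ContDiff ℝ 2 (heatBarrier (d := d) η s₀ t₂ s) :=
  contDiff_exp.comp (contDiff_const.add ((contDiff_norm_sq ℝ).div_const _))

lemma hasDerivAt_heatBarrier {s : ℝ} (hs : s ≠ s₀) (x : ℝ^d) :
    HasDerivAt (fun r => heatBarrier η s₀ t₂ r x)
      ((-η - ‖x‖ ^ 2 / (2 * (s - s₀) ^ 2)) * heatBarrier η s₀ t₂ s x) s := by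
  have hs' : 2 * (s - s₀) ≠ 0 := mul_ne_zero two_ne_zero (sub_ne_zero.2 hs)
  have hq : HasDerivAt (fun r => 2 * (r - s₀)) 2 s := by
    simpa using ((hasDerivAt_id' s).sub_const s₀).const_mul 2
  have := (((hasDerivAt_id' s).const_sub t₂).const_mul η).fun_add
    ((hasDerivAt_const s (‖x‖ ^ 2)).fun_div hq hs') |>.exp
  refine this.congr_deriv ?_
  rw [mul_comm]
  congr 1
  field_simp
  ring

lemma heat_heatBarrier_neg {s : ℝ} (hs : s₀ < s) (hη : d < 2 * η * (s - s₀)) (x : ℝ^d) :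
    deriv (fun r => heatBarrier η s₀ t₂ r x) s + 1 / 2 * lap d (heatBarrier η s₀ t₂ s) x < 0 := by
  have hσ : 0 < s - s₀ := sub_pos.2 hs
  have hlap : lap d (heatBarrier η s₀ t₂ s) x
      = (d / (s - s₀) + ‖x‖ ^ 2 / (s - s₀) ^ 2) * heatBarrier η s₀ t₂ s x := by
    rw [show heatBarrier η s₀ t₂ s = fun y : ℝ^d => exp (η * (t₂ - s) + ‖y‖ ^ 2 / (2 * (s - s₀)))
      from rfl, lap_exp_add_sq_norm_div]
    congr 1
    field_simp
    ring
  rw [(hasDerivAt_heatBarrier η s₀ t₂ hs.ne' x).deriv, hlap]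
  have hH := heatBarrier_pos η s₀ t₂ s x
  have : (d : ℝ) / (2 * (s - s₀)) - η < 0 := by
    rw [sub_neg, div_lt_iff₀ (by positivity)]; linarith
  calc _ = ((d : ℝ) / (2 * (s - s₀)) - η) * heatBarrier η s₀ t₂ s x := by field_simp; ring
    _ < 0 := mul_neg_of_neg_of_pos this hH

lemma exp_le_heatBarrier (hη : 0 ≤ η) {s : ℝ} (hs : s₀ < s) (hst : s ≤ t₂) (x : ℝ^d) :
    exp ((2 * (t₂ - s₀))⁻¹ * ‖x‖ ^ 2) ≤ heatBarrier η s₀ t₂ s x := by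
  refine exp_le_exp.2 (le_add_of_nonneg_of_le (by nlinarith) ?_)
  rw [inv_mul_eq_div]
  gcongr

end Barrier

lemma exists_mul_exp_le_mul_exp {β γ : ℝ} (hβγ : β < γ) (A : ℝ) {ε : ℝ} (hε : 0 < ε) :
    ∃ R, ∀ r, R ≤ r → A * exp (β * r ^ 2) ≤ ε * exp (γ * r ^ 2) := by
  have hγβ : 0 < γ - β := sub_pos.2 hβγ
  refine ⟨max 1 (A / (ε * (γ - β))), fun r hr => ?_⟩
  have hr₁ : 1 ≤ r := le_of_max_le_left hr
  have hA : A ≤ ε * ((γ - β) * r ^ 2) := by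
    have h₁ := (div_le_iff₀ (by positivity)).1 (le_of_max_le_right hr)
    have h₂ : r ≤ r ^ 2 := by nlinarith
    nlinarith [mul_pos hε hγβ]
  have hexp : (γ - β) * r ^ 2 ≤ exp ((γ - β) * r ^ 2) := by
    linarith [add_one_le_exp ((γ - β) * r ^ 2)]
  calc A * exp (β * r ^ 2) ≤ ε * exp ((γ - β) * r ^ 2) * exp (β * r ^ 2) := by
        gcongr; nlinarith
    _ = ε * exp (γ * r ^ 2) := by rw [mul_assoc, ← exp_add]; ring_nf

section MaximumPrinciple

variable {d : ℕ}

lemma heat_nonpos_of_isMaxOn {w : ℝ → ℝ^d → ℝ} {s t₂ : ℝ} {x : ℝ^d} (hst : s < t₂)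
    (hd : DifferentiableAt ℝ (fun r => w r x) s) (hc : Continuous (w s))
    (hmax : ∀ r ∈ Icc s t₂, ∀ y, w r y ≤ w s x) :
    deriv (fun r => w r x) s + 1 / 2 * lap d (w s) x ≤ 0 := by
  have htime := deriv_nonpos_of_isMaxOn_Icc hst hd fun r hr => hmax r hr x
  have hspace := IsLocalMax.lap_nonpos (d := d)
    (Eventually.of_forall fun y => hmax s ⟨le_rfl, hst.le⟩ y) hc
  linarith

structure IsBackwardHeatSubsolution (d : ℕ) (v : ℝ → ℝ^d → ℝ) (t₁ t₂ : ℝ) : Prop where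
  continuousOn : ContinuousOn (fun p : ℝ × ℝ^d => v p.1 p.2) (Icc t₁ t₂ ×ˢ univ)
  differentiableAt : ∀ s ∈ Ico t₁ t₂, ∀ x, DifferentiableAt ℝ (fun r => v r x) s
  contDiff : ∀ s ∈ Ico t₁ t₂, ContDiff ℝ 2 (v s)
  heat_nonneg : ∀ s ∈ Ico t₁ t₂, ∀ x, 0 ≤ deriv (fun r => v r x) s + 1 / 2 * lap d (v s) x

namespace IsBackwardHeatSubsolution

variable {v : ℝ → ℝ^d → ℝ} {t₁ t₂ A β S : ℝ}

lemma mono (hv : IsBackwardHeatSubsolution d v t₁ t₂) {t₁' t₂' : ℝ} (h₁ : t₁ ≤ t₁')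
    (h₂ : t₂' ≤ t₂) : IsBackwardHeatSubsolution d v t₁' t₂' where
  continuousOn := hv.continuousOn.mono (prod_mono (Icc_subset_Icc h₁ h₂) subset_rfl)
  differentiableAt s hs := hv.differentiableAt s (Ico_subset_Ico h₁ h₂ hs)
  contDiff s hs := hv.contDiff s (Ico_subset_Ico h₁ h₂ hs)
  heat_nonneg s hs := hv.heat_nonneg s (Ico_subset_Ico h₁ h₂ hs)

variable {η s₀ ε : ℝ}

lemma heat_sub_mul_heatBarrier_pos (hv : IsBackwardHeatSubsolution d v t₁ t₂) {s : ℝ}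
    (hs : s ∈ Ico t₁ t₂) (hs₀ : s₀ < s) (hη : d < 2 * η * (s - s₀)) (hε : 0 < ε) (x : ℝ^d) :
    0 < deriv (fun r => v r x - ε * heatBarrier η s₀ t₂ r x) s
      + 1 / 2 * lap d (fun y => v s y - ε * heatBarrier η s₀ t₂ s y) x := by
  have hH := hasDerivAt_heatBarrier η s₀ t₂ hs₀.ne' x
  rw [((hv.differentiableAt s hs x).hasDerivAt.fun_sub (hH.const_mul ε)).deriv,
    lap_sub (hv.contDiff s hs) (contDiff_const.mul (contDiff_heatBarrier η s₀ t₂ s)),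
    lap_const_mul, ← hH.deriv]
  nlinarith [hv.heat_nonneg s hs x, heat_heatBarrier_neg η s₀ t₂ hs₀ hη x]

lemma eventually_sub_mul_heatBarrier_nonpos
    (hgrowth : ∀ s ∈ Icc t₁ t₂, ∀ y, v s y ≤ A * exp (β * ‖y‖ ^ 2))
    (hη : 0 ≤ η) (hs₀ : s₀ < t₁) (hβ : β < (2 * (t₂ - s₀))⁻¹) (hε : 0 < ε) :
    ∀ᶠ p in cocompact (ℝ × ℝ^d) ⊓ 𝓟 (Icc t₁ t₂ ×ˢ univ),
      v p.1 p.2 - ε * heatBarrier η s₀ t₂ p.1 p.2 ≤ 0 := by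
  obtain ⟨R, hR⟩ := exists_mul_exp_le_mul_exp hβ A hε
  rw [eventually_inf_principal]
  filter_upwards [(isCompact_Icc.prod (isCompact_closedBall (0 : ℝ^d) R)).compl_mem_cocompact]
    with p hpK hp
  have hRp : R ≤ ‖p.2‖ := by
    by_contra! h
    exact hpK ⟨hp.1, mem_closedBall_zero_iff.2 h.le⟩
  have hH := exp_le_heatBarrier η s₀ t₂ hη (hs₀.trans_le hp.1.1) hp.1.2 p.2
  nlinarith [hgrowth p.1 hp.1 p.2, hR _ hRp]

lemma le_add_mul_heatBarrier (hv : IsBackwardHeatSubsolution d v t₁ t₂)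
    (hgrowth : ∀ s ∈ Icc t₁ t₂, ∀ y, v s y ≤ A * exp (β * ‖y‖ ^ 2))
    (hterm : ∀ y, v t₂ y ≤ S) (hS : 0 ≤ S) (hs₀ : s₀ < t₁) (hη : d < 2 * η * (t₁ - s₀))
    (hβ : β < (2 * (t₂ - s₀))⁻¹) (hε : 0 < ε) :
    ∀ s ∈ Icc t₁ t₂, ∀ y, v s y ≤ S + ε * heatBarrier η s₀ t₂ s y := by
  intro s hs y
  by_contra! hlt
  set w : ℝ → ℝ^d → ℝ := fun r z => v r z - ε * heatBarrier η s₀ t₂ r z with hw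
  have hη₀ : 0 ≤ η := by
    by_contra! h
    nlinarith [(Nat.cast_nonneg d : (0 : ℝ) ≤ d)]
  have hs₀' : ∀ r ∈ Icc t₁ t₂, s₀ < r := fun r hr => hs₀.trans_le hr.1
  have hwcont : ContinuousOn (fun p : ℝ × ℝ^d => w p.1 p.2) (Icc t₁ t₂ ×ˢ univ) :=
    hv.continuousOn.sub (continuousOn_const.mul ((continuousOn_heatBarrier η s₀ t₂).mono
      (prod_mono hs₀' subset_rfl)))
  have hdecay : ∀ᶠ p in cocompact (ℝ × ℝ^d) ⊓ 𝓟 (Icc t₁ t₂ ×ˢ univ), w p.1 p.2 ≤ w s y :=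
    (eventually_sub_mul_heatBarrier_nonpos hgrowth hη₀ hs₀ hβ hε).mono fun p hp => by
      simp only [hw]; linarith
  obtain ⟨⟨s', y'⟩, ⟨hs', -⟩, hmax⟩ :=
    hwcont.exists_isMaxOn' (isClosed_Icc.prod isClosed_univ) (x₀ := (s, y)) ⟨hs, trivial⟩ hdecay
  have hs't : s' < t₂ := by
    refine hs'.2.lt_of_ne fun (h : s' = t₂) => ?_
    have : w s y ≤ w s' y' := hmax (show (s, y) ∈ Icc t₁ t₂ ×ˢ univ from ⟨hs, trivial⟩)
    simp only [hw, h] at this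
    nlinarith [hterm y', heatBarrier_pos η s₀ t₂ t₂ y']
  have hs'Ico : s' ∈ Ico t₁ t₂ := ⟨hs'.1, hs't⟩
  have hwd : DifferentiableAt ℝ (fun r => w r y') s' :=
    (hv.differentiableAt s' hs'Ico y').sub
      ((hasDerivAt_heatBarrier η s₀ t₂ (hs₀' s' hs').ne' y').differentiableAt.const_mul ε)
  have hwc : Continuous (w s') :=
    ((hv.contDiff s' hs'Ico).sub (contDiff_const.mul (contDiff_heatBarrier η s₀ t₂ s'))).continuous
  have hw_le : ∀ r ∈ Icc s' t₂, ∀ z, w r z ≤ w s' y' := fun r hr z =>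
    hmax (show (r, z) ∈ Icc t₁ t₂ ×ˢ univ from ⟨⟨hs'.1.trans hr.1, hr.2⟩, trivial⟩)
  have hηs' : (d : ℝ) < 2 * η * (s' - s₀) := by nlinarith [hs'.1]
  linarith [heat_nonpos_of_isMaxOn hs't hwd hwc hw_le,
    heat_sub_mul_heatBarrier_pos hv hs'Ico (hs₀' s' hs') hηs' hε y']

lemma le_of_terminal_le_of_short (hv : IsBackwardHeatSubsolution d v t₁ t₂) (hβ : 0 < β)
    (hshort : 8 * β * (t₂ - t₁) ≤ 1)
    (hgrowth : ∀ s ∈ Icc t₁ t₂, ∀ y, v s y ≤ A * exp (β * ‖y‖ ^ 2))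
    (hterm : ∀ y, v t₂ y ≤ S) (hS : 0 ≤ S) :
    ∀ s ∈ Icc t₁ t₂, ∀ y, v s y ≤ S := by
  intro s hs y
  have hs₀ : t₁ - (8 * β)⁻¹ < t₁ := sub_lt_self _ (by positivity)
  have hη : (d : ℝ) < 2 * (8 * β * (d + 1)) * (t₁ - (t₁ - (8 * β)⁻¹)) := by
    field_simp
    linarith
  have hβ' : β < (2 * (t₂ - (t₁ - (8 * β)⁻¹)))⁻¹ := by
    have h8β : β * (8 * β)⁻¹ = 8⁻¹ := by field_simp
    rw [← one_div, lt_div_iff₀ (by nlinarith [hs.1.trans hs.2])]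
    nlinarith
  refine le_of_forall_pos_le_add fun δ hδ => ?_
  have hH := heatBarrier_pos (8 * β * (d + 1)) (t₁ - (8 * β)⁻¹) t₂ s y
  have := hv.le_add_mul_heatBarrier hgrowth hterm hS hs₀ hη hβ' (div_pos hδ hH) s hs y
  rwa [div_mul_cancel₀ _ hH.ne'] at this

theorem le_of_terminal_le (hv : IsBackwardHeatSubsolution d v t₁ t₂) (hβ : 0 < β)
    (hgrowth : ∀ s ∈ Icc t₁ t₂, ∀ y, v s y ≤ A * exp (β * ‖y‖ ^ 2))
    (hterm : ∀ y, v t₂ y ≤ S) (hS : 0 ≤ S) :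
    ∀ s ∈ Icc t₁ t₂, ∀ y, v s y ≤ S := by
  have hτ : 0 < (8 * β)⁻¹ := by positivity
  have h8β : 8 * β * (8 * β)⁻¹ = 1 := by field_simp
  have key : ∀ n : ℕ, ∀ s ∈ Icc t₁ t₂, 8 * β * (t₂ - s) ≤ n → ∀ y, v s y ≤ S := by
    intro n
    induction n with
    | zero =>
      intro s hs hsn
      obtain rfl : s = t₂ := le_antisymm hs.2 (by push_cast at hsn; nlinarith)
      exact hterm
    | succ n ih =>
      intro s hs hsn
      have hs' : s ≤ min (s + (8 * β)⁻¹) t₂ := le_min (by linarith) hs.2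
      have ht' : min (s + (8 * β)⁻¹) t₂ ∈ Icc t₁ t₂ := ⟨hs.1.trans hs', min_le_right _ _⟩
      refine (hv.mono hs.1 ht'.2).le_of_terminal_le_of_short hβ ?_
        (fun r hr => hgrowth r ⟨hs.1.trans hr.1, hr.2.trans ht'.2⟩) (ih _ ht' ?_) hS s ⟨le_rfl, hs'⟩
      · nlinarith [min_le_left (s + (8 * β)⁻¹) t₂]
      · push_cast at hsn
        rcases min_cases (s + (8 * β)⁻¹) t₂ with ⟨h, -⟩ | ⟨h, -⟩ <;> rw [h] <;> nlinarith
  obtain ⟨n, hn⟩ := exists_nat_ge (8 * β * (t₂ - t₁))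
  exact fun s hs => key n s hs (by nlinarith [hs.1])

end IsBackwardHeatSubsolution

end MaximumPrinciple

lemma Seminorm.le_sum_single_mul_norm {ι : Type*} [Fintype ι] [DecidableEq ι]
    (p : Seminorm ℝ (EuclideanSpace ℝ ι)) (x : EuclideanSpace ℝ ι) :
    p x ≤ (∑ i, p (EuclideanSpace.single i 1)) * ‖x‖ := by
  calc p x = p (∑ i, x i • EuclideanSpace.single i (1 : ℝ)) := by
        conv_lhs => rw [← (EuclideanSpace.basisFun ι ℝ).sum_repr x]
        simp
    _ ≤ ∑ i, p (x i • EuclideanSpace.single i (1 : ℝ)) :=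
        Finset.le_sum_of_subadditive p (map_zero p).le (map_add_le_add p) _ _
    _ ≤ ∑ i, ‖x‖ * p (EuclideanSpace.single i 1) := by
        refine Finset.sum_le_sum fun i _ => ?_
        rw [map_smul_eq_mul]
        exact mul_le_mul_of_nonneg_right (PiLp.norm_apply_le x i) (apply_nonneg _ _)
    _ = _ := by rw [← Finset.mul_sum, mul_comm]

lemma sq_le_of_exp_mul_abs_le {a C z q r : ℝ} (h : exp (a * q ^ 2) * |z| ≤ C) (hq : |q| ≤ r) :
    z ^ 2 ≤ C ^ 2 * exp (2 * |a| * r ^ 2) := by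
  have hz : |z| ≤ C * exp (|a| * r ^ 2) := by
    have hq2 : q ^ 2 ≤ r ^ 2 := sq_le_sq' (abs_le.1 hq).1 (abs_le.1 hq).2
    have : -(a * q ^ 2) ≤ |a| * r ^ 2 := by nlinarith [neg_abs_le a, abs_nonneg a, sq_nonneg q]
    calc |z| = exp (-(a * q ^ 2)) * (exp (a * q ^ 2) * |z|) := by
          rw [← mul_assoc, ← exp_add, neg_add_cancel, exp_zero, one_mul]
      _ ≤ exp (|a| * r ^ 2) * C := by gcongr
      _ = _ := mul_comm _ _
  calc z ^ 2 = |z| ^ 2 := (sq_abs z).symm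
    _ ≤ (C * exp (|a| * r ^ 2)) ^ 2 := by gcongr
    _ = _ := by rw [mul_pow, ← exp_nat_mul]; ring_nf

section Application

variable {d : ℕ}

lemma exists_exp_mul_one_add_sq_le {u : ℝ → ℝ^d → ℝ} {c T : ℝ} (p : Seminorm ℝ (ℝ^d))
    (h : ∃ a C : ℝ, ∀ s ∈ Icc 0 T, ∀ y, exp (a * p y ^ 2) * |u s y| ≤ C) :
    ∃ A β : ℝ, 0 < β ∧ ∀ s ∈ Icc 0 T, ∀ y,
      exp (2 * c * (s - T)) * (1 + u s y ^ 2) ≤ A * exp (β * ‖y‖ ^ 2) := by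
  obtain ⟨a, C, h⟩ := h
  set K := ∑ i, p (EuclideanSpace.single i 1)
  refine ⟨exp (2 * |c| * T) * (1 + C ^ 2), 2 * |a| * K ^ 2 + 1, by positivity, fun s hs y => ?_⟩
  have hp : |p y| ≤ K * ‖y‖ := by
    rw [abs_of_nonneg (apply_nonneg p y)]; exact p.le_sum_single_mul_norm y
  have hu := sq_le_of_exp_mul_abs_le (h s hs y) hp
  have hE : exp (2 * c * (s - T)) ≤ exp (2 * |c| * T) :=
    exp_le_exp.2 (by nlinarith [neg_abs_le c, abs_nonneg c, hs.1, hs.2])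
  have hexp : exp (2 * |a| * (K * ‖y‖) ^ 2) ≤ exp ((2 * |a| * K ^ 2 + 1) * ‖y‖ ^ 2) :=
    exp_le_exp.2 (by nlinarith [sq_nonneg ‖y‖])
  have hone : 1 ≤ exp ((2 * |a| * K ^ 2 + 1) * ‖y‖ ^ 2) := one_le_exp (by positivity)
  calc exp (2 * c * (s - T)) * (1 + u s y ^ 2)
      ≤ exp (2 * |c| * T) * (1 + C ^ 2 * exp (2 * |a| * (K * ‖y‖) ^ 2)) := by
        gcongr
    _ ≤ exp (2 * |c| * T) * ((1 + C ^ 2) * exp ((2 * |a| * K ^ 2 + 1) * ‖y‖ ^ 2)) := by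
        gcongr
        nlinarith [sq_nonneg C]
    _ = _ := by ring

lemma heat_exp_mul_one_add_sq_nonneg {u : ℝ → ℝ^d → ℝ} {c T F s : ℝ} {x : ℝ^d}
    (hd : DifferentiableAt ℝ (fun r => u r x) s) (hC2 : ContDiff ℝ 2 (u s))
    (hpde : deriv (fun r => u r x) s + 1 / 2 * lap d (u s) x + F = 0)
    (hF : u s x * F ≤ c * (1 + u s x ^ 2)) :
    0 ≤ deriv (fun r => exp (2 * c * (r - T)) * (1 + u r x ^ 2)) s
      + 1 / 2 * lap d (fun y => exp (2 * c * (s - T)) * (1 + u s y ^ 2)) x := by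
  have hE₀ : 0 ≤ exp (2 * c * (s - T)) := (exp_pos _).le
  have hE : HasDerivAt (fun r => exp (2 * c * (r - T))) (exp (2 * c * (s - T)) * (2 * c)) s := by
    simpa using (((hasDerivAt_id' s).sub_const T).const_mul (2 * c)).exp
  have hU := (hd.hasDerivAt.fun_pow 2).const_add 1
  rw [(hE.fun_mul hU).deriv, lap_const_mul, lap_const_add]
  have hlap := mul_le_mul_of_nonneg_left (two_mul_lap_le_lap_sq hC2 x) hE₀
  have hcoer := mul_le_mul_of_nonneg_left hF hE₀
  have hU' : deriv (fun r => u r x) s = -(1 / 2 * lap d (u s) x) - F := by linarith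
  rw [hU', Nat.add_one_sub_one, pow_one]
  nlinarith

lemma isBackwardHeatSubsolution_exp_mul_one_add_sq {u : ℝ → ℝ^d → ℝ} {c T : ℝ}
    {f : ℝ → ℝ^d → ℝ → ℝ} (hcoercive : ∀ t ∈ Icc 0 T, ∀ x y, y * f t x y ≤ c * (1 + y ^ 2))
    (hucont : ContinuousOn (fun p : ℝ × ℝ^d => u p.1 p.2) (Icc 0 T ×ˢ univ))
    (husmooth : ∀ t ∈ Ico 0 T, ∀ x,
      DifferentiableAt ℝ (fun s => u s x) t ∧ ContDiff ℝ 2 (u t))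
    (hpde : ∀ t ∈ Ico 0 T, ∀ x,
      deriv (fun s => u s x) t + 1 / 2 * lap d (u t) x + f t x (u t x) = 0) :
    IsBackwardHeatSubsolution d (fun s y => exp (2 * c * (s - T)) * (1 + u s y ^ 2)) 0 T where
  continuousOn := (by fun_prop : Continuous fun p : ℝ × ℝ^d => exp (2 * c * (p.1 - T)))
    |>.continuousOn.mul (continuousOn_const.add (hucont.pow 2))
  differentiableAt s hs x :=
    (by fun_prop : DifferentiableAt ℝ (fun r => exp (2 * c * (r - T))) s).mul
      (((husmooth s hs x).1.pow 2).const_add 1)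
  contDiff s hs := contDiff_const.mul (contDiff_const.add ((husmooth s hs 0).2.pow 2))
  heat_nonneg s hs x := heat_exp_mul_one_add_sq_nonneg (husmooth s hs x).1 (husmooth s hs x).2
    (hpde s hs x) (hcoercive s (Ico_subset_Icc_self hs) x _)

end Application

lemma iSup_ofReal_abs_le_of_sq_le {ι : Type*} (F G : ι → ℝ) {k : ℝ} (hk : 0 < k)
    (h : ∀ M, 0 ≤ M → (∀ y, G y ^ 2 ≤ M) → ∀ x, F x ^ 2 ≤ k ^ 2 * (1 + M)) :
    (⨆ x, ENNReal.ofReal |F x|)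
      ≤ ENNReal.ofReal k * (1 + ⨆ y, ENNReal.ofReal (|G y| ^ 2)) ^ ((1 : ℝ) / 2) := by
  by_cases htop : (⨆ y, ENNReal.ofReal (|G y| ^ 2)) = ⊤
  · rw [htop, add_top, ENNReal.top_rpow_of_pos (by norm_num),
      ENNReal.mul_top (ENNReal.ofReal_pos.2 hk).ne']
    exact le_top
  set M := (⨆ y, ENNReal.ofReal (|G y| ^ 2)).toReal
  have hM : ∀ y, G y ^ 2 ≤ M := fun y => by
    rw [← sq_abs]
    exact (ENNReal.ofReal_le_iff_le_toReal htop).1 (le_iSup (fun y => ENNReal.ofReal (|G y| ^ 2)) y)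
  have hM₀ : 0 ≤ M := ENNReal.toReal_nonneg
  rw [show 1 + ⨆ y, ENNReal.ofReal (|G y| ^ 2) = ENNReal.ofReal (1 + M) by
      rw [ENNReal.ofReal_add zero_le_one hM₀, ENNReal.ofReal_one, ENNReal.ofReal_toReal htop],
    ENNReal.ofReal_rpow_of_nonneg (by positivity) (by norm_num), ← ENNReal.ofReal_mul hk.le]
  refine iSup_le fun x => ENNReal.ofReal_le_ofReal ?_
  calc |F x| ≤ √(k ^ 2 * (1 + M)) := Real.abs_le_sqrt (h M hM₀ hM x)
    _ = _ := by rw [Real.sqrt_mul (sq_nonneg k), Real.sqrt_sq hk.le, Real.sqrt_eq_rpow]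

theorem apriori_bound_backward_reaction_diffusion_general (d : ℕ) (T : ℝ) (c : ℝ)
    (f : ℝ → EuclideanSpace ℝ (Fin d) → ℝ → ℝ)
    (hcoercive : ∀ t ∈ Set.Icc (0:ℝ) T, ∀ (x : EuclideanSpace ℝ (Fin d)) (y : ℝ),
      y * f t x y ≤ c * (1 + y ^ 2))
    (u : ℝ → EuclideanSpace ℝ (Fin d) → ℝ)
    (hucont : ContinuousOn (fun p : ℝ × EuclideanSpace ℝ (Fin d) => u p.1 p.2)
      (Set.Icc 0 T ×ˢ Set.univ))
    (husmooth : ∀ t ∈ Set.Ico (0:ℝ) T, ∀ x : EuclideanSpace ℝ (Fin d),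
      DifferentiableAt ℝ (fun s => u s x) t ∧ ContDiff ℝ 2 (u t))
    (N : EuclideanSpace ℝ (Fin d) → ℝ)
    (hN_add : ∀ x y, N (x + y) ≤ N x + N y)
    (hN_smul : ∀ (a : ℝ) (x), N (a • x) = |a| * N x)
    (hgrowth : ∃ a C : ℝ, ∀ s ∈ Set.Icc (0:ℝ) T, ∀ y : EuclideanSpace ℝ (Fin d),
      Real.exp (a * N y ^ 2) * |u s y| ≤ C)
    (hpde : ∀ t ∈ Set.Ico (0:ℝ) T, ∀ x : EuclideanSpace ℝ (Fin d),
      deriv (fun s => u s x) t + (1/2) * lap d (u t) x + f t x (u t x) = 0)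
    (t : ℝ) (ht : t ∈ Set.Icc (0:ℝ) T) :
    (⨆ x : EuclideanSpace ℝ (Fin d), ENNReal.ofReal |u t x|)
      ≤ ENNReal.ofReal (Real.exp (c * (T - t)))
          * (1 + ⨆ x : EuclideanSpace ℝ (Fin d), ENNReal.ofReal (|u T x| ^ 2))
            ^ ((1:ℝ)/2) := by
  have hv := isBackwardHeatSubsolution_exp_mul_one_add_sq hcoercive hucont husmooth hpde
  obtain ⟨A, β, hβ, hv_growth⟩ := exists_exp_mul_one_add_sq_le (c := c)
    (Seminorm.of N hN_add fun a x => by rw [Real.norm_eq_abs]; exact hN_smul a x) hgrowth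
  refine iSup_ofReal_abs_le_of_sq_le _ _ (exp_pos _) fun M hM hterm x => ?_
  have hvt := hv.le_of_terminal_le hβ hv_growth (S := 1 + M)
    (fun y => by simpa using hterm y) (by linarith) t ht x
  have hk : exp (c * (T - t)) ^ 2 * exp (2 * c * (t - T)) = 1 := by
    rw [sq, ← exp_add, ← exp_add, ← exp_zero]; ring_nf
  nlinarith [mul_le_mul_of_nonneg_left hvt (sq_nonneg (exp (c * (T - t))))]

theorem apriori_bound_backward_reaction_diffusion (d : ℕ) (T : ℝ) (hT : 0 < T) (c : ℝ)
    (f : ℝ → EuclideanSpace ℝ (Fin d) → ℝ → ℝ)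
    (hcoercive : ∀ t ∈ Set.Icc (0:ℝ) T, ∀ (x : EuclideanSpace ℝ (Fin d)) (y : ℝ),
      y * f t x y ≤ c * (1 + y ^ 2))
    (u : ℝ → EuclideanSpace ℝ (Fin d) → ℝ)
    (hucont : ContinuousOn (fun p : ℝ × EuclideanSpace ℝ (Fin d) => u p.1 p.2)
      (Set.Icc 0 T ×ˢ Set.univ))
    (husmooth : ∀ t ∈ Set.Ico (0:ℝ) T, ∀ x : EuclideanSpace ℝ (Fin d),
      DifferentiableAt ℝ (fun s => u s x) t ∧ ContDiff ℝ 2 (u t))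
    (N : EuclideanSpace ℝ (Fin d) → ℝ)
    (hN_add : ∀ x y, N (x + y) ≤ N x + N y)
    (hN_smul : ∀ (a : ℝ) (x), N (a • x) = |a| * N x)
    (hN_eq_zero : ∀ x, N x = 0 → x = 0)
    (hgrowth : ∃ a C : ℝ, ∀ s ∈ Set.Icc (0:ℝ) T, ∀ y : EuclideanSpace ℝ (Fin d),
      Real.exp (a * N y ^ 2) * |u s y| ≤ C)
    (hpde : ∀ t ∈ Set.Ico (0:ℝ) T, ∀ x : EuclideanSpace ℝ (Fin d),
      deriv (fun s => u s x) t + (1/2) * lap d (u t) x + f t x (u t x) = 0)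
    (t : ℝ) (ht : t ∈ Set.Icc (0:ℝ) T) :
    (⨆ x : EuclideanSpace ℝ (Fin d), ENNReal.ofReal |u t x|)
      ≤ ENNReal.ofReal (Real.exp (c * (T - t)))
          * (1 + ⨆ x : EuclideanSpace ℝ (Fin d), ENNReal.ofReal (|u T x| ^ 2))
            ^ ((1:ℝ)/2) :=
  apriori_bound_backward_reaction_diffusion_general d T c f hcoercive u hucont husmooth N hN_add
    hN_smul hgrowth hpde t ht
end

section
/- Let (𝔠_{n,M})_{n∈ℕ₀, M∈ℕ} ⊆ ℕ₀ satisfy 𝔠_{0,M} = 0 and 𝔠_{n,M} ≤ (2d+1)M^n + ∑_{l=1}^{n-1} M^{n-l}(d + 1 + 𝔠_{l,M} + 𝔠_{l-1,M}) for all n, M ∈ ℕ. Then 𝔠_{n,M} ≤ d (5M)^n for all n, M ∈ ℕ. -/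
/-!
By strong induction on `n`, with `M` fixed: if `𝔠 l M ≤ d (5M)^l` for all `l < n`, then each summand
of the recursion is at most `M^(n-l) · 4d(5M)^l = 4d 5^l M^n`, and `∑_{l=1}^{n-1} 4 · 5^l = 5^n - 5`,
so the whole right-hand side is at most `(2d+1) M^n + d (5^n - 5) M^n ≤ d (5M)^n`.
-/

theorem geom_sum_Icc_mul_add {α : Type*} [Semiring α] (x : α) {n : ℕ} (hn : 1 ≤ n) :
    (∑ l ∈ Finset.Icc 1 (n - 1), (x + 1) ^ l) * x + (x + 1) = (x + 1) ^ n := by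
  obtain ⟨k, rfl⟩ : ∃ k, n = k + 1 := ⟨n - 1, by omega⟩
  simp only [Nat.add_sub_cancel]
  clear hn
  induction k with
  | zero => simp
  | succ k ih =>
    rw [Finset.sum_Icc_succ_top (by omega), add_mul, add_right_comm, ih, add_comm,
      pow_succ _ (k + 1), mul_add, mul_one]

namespace MLPCost

variable {d M : ℕ}

theorem summand_le (hd : 1 ≤ d) (hM : 1 ≤ M) {n l a b : ℕ} (hln : l ≤ n)
    (ha : a ≤ d * (5 * M) ^ l) (hb : b ≤ d * (5 * M) ^ l) :
    M ^ (n - l) * (d + 1 + a + b) ≤ 4 * d * M ^ n * 5 ^ l := by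
  have hpow : 1 ≤ (5 * M) ^ l := Nat.one_le_pow _ _ (by omega)
  have hinner : d + 1 + a + b ≤ 4 * d * (5 * M) ^ l := by nlinarith
  calc M ^ (n - l) * (d + 1 + a + b) ≤ M ^ (n - l) * (4 * d * (5 * M) ^ l) := by gcongr
    _ = 4 * d * (M ^ (n - l) * M ^ l) * 5 ^ l := by ring
    _ = 4 * d * M ^ n * 5 ^ l := by rw [← pow_add, Nat.sub_add_cancel hln]

theorem le_of_recursion_step (hd : 1 ≤ d) (hM : 1 ≤ M) (c : ℕ → ℕ) {n : ℕ} (hn : 1 ≤ n)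
    (hlt : ∀ m < n, c m ≤ d * (5 * M) ^ m)
    (hrec : c n ≤ (2 * d + 1) * M ^ n
      + ∑ l ∈ Finset.Icc 1 (n - 1), M ^ (n - l) * (d + 1 + c l + c (l - 1))) :
    c n ≤ d * (5 * M) ^ n := by
  set S := ∑ l ∈ Finset.Icc 1 (n - 1), 5 ^ l
  have hterm : ∀ l ∈ Finset.Icc 1 (n - 1),
      M ^ (n - l) * (d + 1 + c l + c (l - 1)) ≤ 4 * d * M ^ n * 5 ^ l := by
    intro l hl
    rw [Finset.mem_Icc] at hl
    refine summand_le hd hM (by omega) (hlt l (by omega)) ((hlt (l - 1) (by omega)).trans ?_)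
    gcongr
    · omega
    · omega
  have hS : S * 4 + 5 = 5 ^ n := geom_sum_Icc_mul_add 4 hn
  calc c n ≤ (2 * d + 1) * M ^ n + ∑ l ∈ Finset.Icc 1 (n - 1), 4 * d * M ^ n * 5 ^ l :=
        hrec.trans (add_le_add_right (Finset.sum_le_sum hterm) _)
    _ = (2 * d + 1) * M ^ n + d * M ^ n * (S * 4) := by rw [← Finset.mul_sum]; ring
    _ ≤ d * M ^ n * (S * 4 + 5) := by
        nlinarith [Nat.mul_le_mul_right (M ^ n) (show 2 * d + 1 ≤ d * 5 by omega)]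
    _ = d * (5 * M) ^ n := by rw [hS]; ring

end MLPCost

theorem mlp_computational_cost (d : ℕ) (hd : 1 ≤ d) (𝔠 : ℕ → ℕ → ℕ)
    (h0 : ∀ M : ℕ, 1 ≤ M → 𝔠 0 M = 0)
    (hrec : ∀ n M : ℕ, 1 ≤ n → 1 ≤ M →
      𝔠 n M ≤ (2 * d + 1) * M ^ n
        + ∑ l ∈ Finset.Icc 1 (n - 1), M ^ (n - l) * (d + 1 + 𝔠 l M + 𝔠 (l - 1) M))
    (n M : ℕ) (hn : 1 ≤ n) (hM : 1 ≤ M) :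
    𝔠 n M ≤ d * (5 * M) ^ n := by
  induction n using Nat.strong_induction_on with
  | _ n ih =>
    refine MLPCost.le_of_recursion_step hd hM (𝔠 · M) hn (fun m hm => ?_) (hrec n M hn hM)
    rcases Nat.eq_zero_or_pos m with rfl | hm0
    · simp [h0 M hM]
    · exact ih m hm hm0
end

section
/- Let α, β, c, κ, ρ > 0, K ∈ ℕ₀, (γ_n)_{n∈ℕ} ⊆ [0,∞), (ε_{n,r})_{n∈ℕ, r≥ρ} ⊆ [0,∞), and L : (0,∞) → [0,∞). Assume γ_n ≤ (αn)^n and ε_{n,r} ≤ c e^{L(r)} κ^n (1 + βL(r))^n n^{-n/2} for all n ∈ ℕ and r ≥ ρ, and let ϱ : ℕ → (0,∞) satisfy limsup_{n→∞} [L(ϱ_n)/ln(n) + 1/ϱ_n] = 0. Then there exist 𝔑 : (0,1] → ℕ and 𝔠 : (0,∞) → [0,∞) such that for every δ > 0 and ε ∈ (0,1]: sup_{1 ≤ n ≤ 𝔑_ε + K} γ_n ≤ 𝔠_δ ε^{-(2+2δ)} and sup_{n ≥ 𝔑_ε} ε_{n,ϱ_n} ≤ ε. -/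
open Filter Real Topology

private lemma cost_pow_mono {a : ℝ} (ha : 1 ≤ a) {n M : ℕ} (hn : 1 ≤ n) (hnM : n ≤ M) :
    (a * n) ^ n ≤ (a * M) ^ M := by
  have hnR : (n : ℝ) ≤ M := Nat.cast_le.mpr hnM
  have hn1 : (1 : ℝ) ≤ n := by exact_mod_cast hn
  have h1 : (a * n) ^ n ≤ (a * M) ^ n := by
    apply pow_le_pow_left₀ (by positivity)
    nlinarith
  refine h1.trans (pow_le_pow_right₀ ?_ hnM)
  nlinarith

set_option maxHeartbeats 2000000 in
theorem cost_vs_error (α β c κ ρ : ℝ) (hα : 0 < α) (hβ : 0 < β) (hc : 0 < c)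
    (hκ : 0 < κ) (hρ : 0 < ρ) (K : ℕ)
    (γ : ℕ → ℝ) (hγ0 : ∀ n, 0 ≤ γ n)
    (εf : ℕ → ℝ → ℝ) (hε0 : ∀ n : ℕ, 1 ≤ n → ∀ r : ℝ, ρ ≤ r → 0 ≤ εf n r)
    (L : ℝ → ℝ) (hL : ∀ r : ℝ, 0 < r → 0 ≤ L r)
    (hγ : ∀ n : ℕ, 1 ≤ n → γ n ≤ (α * n) ^ n)
    (hε : ∀ n : ℕ, 1 ≤ n → ∀ r : ℝ, ρ ≤ r →
      εf n r ≤ c * Real.exp (L r) * κ ^ n * (1 + β * L r) ^ n * (n : ℝ) ^ (-(n : ℝ) / 2))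
    (ϱ : ℕ → ℝ) (hϱpos : ∀ n, 0 < ϱ n)
    (hϱ : Filter.Tendsto (fun n : ℕ => L (ϱ n) / Real.log n + 1 / ϱ n)
      Filter.atTop (nhds 0)) :
    ∃ (N : ℝ → ℕ) (C : ℝ → ℝ),
      ∀ δ : ℝ, 0 < δ → ∀ ε : ℝ, ε ∈ Set.Ioc (0:ℝ) 1 →
        0 ≤ C δ ∧ 1 ≤ N ε ∧
        (∀ n : ℕ, 1 ≤ n → n ≤ N ε + K → γ n ≤ C δ * ε ^ (-(2 + 2 * δ))) ∧
        (∀ n : ℕ, N ε ≤ n → εf n (ϱ n) ≤ ε) := by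
  classical
  set α' : ℝ := max α 1 with hα'def
  have hα'1 : (1:ℝ) ≤ α' := le_max_right _ _
  have hαα' : α ≤ α' := le_max_left _ _
  set L' : ℕ → ℝ := fun m => L (ϱ m) with hL'def
  have hL0 : ∀ m, 0 ≤ L' m := fun m => hL _ (hϱpos m)
  -- the two component limits
  have ht : Tendsto (fun m : ℕ => L' m / Real.log m) atTop (nhds 0) := by
    apply squeeze_zero' ?_ ?_ hϱ
    · filter_upwards with m
      exact div_nonneg (hL0 m) (Real.log_natCast_nonneg m)
    · filter_upwards with m
      have := one_div_pos.mpr (hϱpos m); linarith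
  have hr : Tendsto (fun m : ℕ => 1 / ϱ m) atTop (nhds 0) := by
    apply squeeze_zero' ?_ ?_ hϱ
    · filter_upwards with m; exact (one_div_pos.mpr (hϱpos m)).le
    · filter_upwards with m
      have : 0 ≤ L' m / Real.log m := div_nonneg (hL0 m) (Real.log_natCast_nonneg m)
      linarith
  obtain ⟨n₀, hn₀⟩ : ∃ n₀ : ℕ, ∀ m, n₀ ≤ m → ρ ≤ ϱ m := by
    have hev : ∀ᶠ m : ℕ in atTop, 1 / ϱ m < 1 / ρ :=
      Filter.Tendsto.eventually_lt_const (by positivity) hr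
    refine eventually_atTop.mp (hev.mono fun m hm => ?_)
    have h1 := hϱpos m
    rw [div_lt_div_iff₀ h1 hρ] at hm
    linarith
  set n₁ : ℕ := max n₀ 1 with hn₁def
  have hn₁1 : 1 ≤ n₁ := le_max_right _ _
  set B : ℕ → ℝ :=
    fun m => c * Real.exp (L' m) * κ ^ m * (1 + β * L' m) ^ m * (m:ℝ) ^ (-(m:ℝ)/2) with hBdef
  have h1L : ∀ m, (0:ℝ) < 1 + β * L' m := fun m => by nlinarith [hL0 m, hβ]
  have hBpos : ∀ m : ℕ, 1 ≤ m → 0 < B m := by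
    intro m hm
    have hm0 : (0:ℝ) < m := by exact_mod_cast hm
    exact mul_pos (mul_pos (mul_pos (mul_pos hc (Real.exp_pos _)) (pow_pos hκ _))
      (pow_pos (h1L m) _)) (Real.rpow_pos_of_pos hm0 _)
  have hεB : ∀ m : ℕ, n₁ ≤ m → εf m (ϱ m) ≤ B m := fun m hm =>
    hε m (le_trans (le_max_right n₀ 1) hm) (ϱ m) (hn₀ m (le_trans (le_max_left _ _) hm))
  have hlogB : ∀ m : ℕ, 1 ≤ m → Real.log (B m)
      = Real.log c + L' m + m * Real.log κ + m * Real.log (1 + β * L' m)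
        + (-(m:ℝ)/2) * Real.log m := by
    intro m hm
    have hm0 : (0:ℝ) < m := by exact_mod_cast hm
    have hA1 : c * Real.exp (L' m) ≠ 0 := by positivity
    have hA2 : c * Real.exp (L' m) * κ ^ m ≠ 0 := by positivity
    have hA3 : c * Real.exp (L' m) * κ ^ m * (1 + β * L' m) ^ m ≠ 0 :=
      ne_of_gt (mul_pos (by positivity) (pow_pos (h1L m) _))
    rw [hBdef]
    rw [Real.log_mul hA3 (ne_of_gt (Real.rpow_pos_of_pos hm0 _)),
        Real.log_mul hA2 (ne_of_gt (pow_pos (h1L m) _)),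
        Real.log_mul hA1 (ne_of_gt (pow_pos hκ _)),
        Real.log_mul (ne_of_gt hc) (ne_of_gt (Real.exp_pos _)),
        Real.log_exp, Real.log_pow, Real.log_pow, Real.log_rpow hm0]
  have hlogm : Tendsto (fun m : ℕ => Real.log m) atTop atTop :=
    Real.tendsto_log_atTop.comp tendsto_natCast_atTop_atTop
  have hml : Tendsto (fun m : ℕ => (m:ℝ) * Real.log m) atTop atTop := by
    apply Filter.tendsto_atTop_mono' atTop ?_ hlogm
    filter_upwards [eventually_ge_atTop 1] with m hm
    have h1 : (1:ℝ) ≤ m := by exact_mod_cast hm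
    nlinarith [Real.log_natCast_nonneg m]
  have h1 : Tendsto (fun m : ℕ => Real.log c / ((m:ℝ) * Real.log m)) atTop (nhds 0) :=
    tendsto_const_nhds.div_atTop hml
  have h2 : Tendsto (fun m : ℕ => L' m / ((m:ℝ) * Real.log m)) atTop (nhds 0) := by
    apply squeeze_zero' ?_ ?_ ht
    · filter_upwards with m
      exact div_nonneg (hL0 m) (mul_nonneg (Nat.cast_nonneg m) (Real.log_natCast_nonneg m))
    · filter_upwards [eventually_ge_atTop 2] with m hm
      have hm1 : (1:ℝ) < m := by exact_mod_cast hm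
      have hlm : 0 < Real.log m := Real.log_pos hm1
      exact div_le_div_of_nonneg_left (hL0 m) hlm (by nlinarith)
  have h3 : Tendsto (fun m : ℕ => Real.log κ / Real.log m) atTop (nhds 0) :=
    tendsto_const_nhds.div_atTop hlogm
  have h4 : Tendsto (fun m : ℕ => Real.log (1 + β * L' m) / Real.log m) atTop (nhds 0) := by
    have hlim : Tendsto (fun m : ℕ => β * (L' m / Real.log m)) atTop (nhds 0) := by
      simpa using ht.const_mul β
    apply squeeze_zero' ?_ ?_ hlim
    · filter_upwards with m
      exact div_nonneg (Real.log_nonneg (by nlinarith [hL0 m])) (Real.log_natCast_nonneg m)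
    · filter_upwards [eventually_ge_atTop 2] with m hm
      have hm1 : (1:ℝ) < m := by exact_mod_cast hm
      have hlm : 0 < Real.log m := Real.log_pos hm1
      have hle : Real.log (1 + β * L' m) ≤ β * L' m := by
        have := Real.log_le_sub_one_of_pos (h1L m); linarith
      rw [← mul_div_assoc]
      exact (div_le_div_iff_of_pos_right hlm).mpr hle
  -- main asymptotics of log B
  have hq : Tendsto (fun m : ℕ => Real.log (B m) / ((m:ℝ) * Real.log m)) atTop
      (nhds (-(1/2))) := by
    have hsum : Tendsto (fun m : ℕ => Real.log c / ((m:ℝ)*Real.log m)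
        + L' m/((m:ℝ)*Real.log m) + Real.log κ / Real.log m
        + Real.log (1+β*L' m)/Real.log m + (-(1:ℝ)/2)) atTop
        (nhds (0 + 0 + 0 + 0 + (-(1:ℝ)/2))) :=
      ((((h1.add h2).add h3).add h4).add tendsto_const_nhds)
    rw [show (0:ℝ)+0+0+0+(-(1:ℝ)/2) = -(1/2) by norm_num] at hsum
    apply hsum.congr'
    filter_upwards [eventually_ge_atTop 2] with m hm
    have hm1 : (1:ℝ) < m := by exact_mod_cast hm
    have hlm : Real.log m ≠ 0 := ne_of_gt (Real.log_pos hm1)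
    have hm0 : (m:ℝ) ≠ 0 := by positivity
    rw [hlogB m (by omega)]
    field_simp
  have hf : Tendsto (fun m : ℕ => -Real.log (B m) / ((m:ℝ) * Real.log m)) atTop
      (nhds (1/2)) := by
    have := hq.neg
    simp only [neg_div] at *
    simpa using this
  have hlogBot : Tendsto (fun m : ℕ => Real.log (B m)) atTop atBot := by
    have hev : ∀ᶠ m : ℕ in atTop,
        Real.log (B m) ≤ -(1/4) * ((m:ℝ) * Real.log m) := by
      have h14 : ∀ᶠ m : ℕ in atTop,
          Real.log (B m) / ((m:ℝ)*Real.log m) < -(1/4) :=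
        Filter.Tendsto.eventually_lt_const (by norm_num) hq
      filter_upwards [h14, eventually_ge_atTop 2] with m hm hm2
      have hm1 : (1:ℝ) < m := by exact_mod_cast hm2
      have hD : 0 < (m:ℝ) * Real.log m := mul_pos (by linarith) (Real.log_pos hm1)
      rw [div_lt_iff₀ hD] at hm; linarith
    apply Filter.tendsto_atBot_mono' atTop hev ?_
    have h14' := hml.const_mul_atTop (show (0:ℝ) < 1/4 by norm_num)
    have h' := tendsto_neg_atTop_atBot.comp h14'
    apply h'.congr; intro m; simp only [Function.comp_apply]; ring
  have hB0 : Tendsto B atTop (nhds 0) := by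
    apply (Real.tendsto_exp_atBot.comp hlogBot).congr'
    filter_upwards [eventually_ge_atTop 1] with m hm
    exact Real.exp_log (hBpos m hm)
  set Bfull : ℕ → ℝ := fun m => if m < n₁ then |εf m (ϱ m)| + 2 else B m with hBfulldef
  have hBfull0 : Tendsto Bfull atTop (nhds 0) := by
    apply hB0.congr'
    filter_upwards [eventually_ge_atTop n₁] with m hm
    simp [hBfulldef, Nat.not_lt.mpr hm]
  -- the g limit
  have hg2 : Tendsto (fun m : ℕ => Real.log (α' * ((m:ℝ)+1+K)) / Real.log m) atTop
      (nhds 1) := by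
    have ha : Tendsto (fun m:ℕ => Real.log α' / Real.log m) atTop (nhds 0) :=
      tendsto_const_nhds.div_atTop hlogm
    have hb : Tendsto (fun m:ℕ => Real.log ((m:ℝ)+1+K) / Real.log m) atTop (nhds 1) := by
      have hupper : Tendsto (fun m:ℕ => Real.log 2 / Real.log m + 1) atTop (nhds 1) := by
        have h0 : Tendsto (fun m:ℕ => Real.log 2 / Real.log m) atTop (nhds 0) :=
          tendsto_const_nhds.div_atTop hlogm
        simpa using h0.add (tendsto_const_nhds : Tendsto (fun _ : ℕ => (1:ℝ)) atTop (nhds 1))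
      apply tendsto_of_tendsto_of_tendsto_of_le_of_le'
        (tendsto_const_nhds : Tendsto (fun _ : ℕ => (1:ℝ)) atTop (nhds 1)) hupper
      · filter_upwards [eventually_ge_atTop 2] with m hm
        have hm1 : (1:ℝ) < m := by exact_mod_cast hm
        have hlm : 0 < Real.log m := Real.log_pos hm1
        rw [le_div_iff₀ hlm, one_mul]
        apply Real.log_le_log (by linarith)
        have : (0:ℝ) ≤ K := Nat.cast_nonneg K
        linarith
      · filter_upwards [eventually_ge_atTop 2, eventually_ge_atTop (K+1)] with m hm2 hmK
        have hm1 : (1:ℝ) < m := by exact_mod_cast hm2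
        have hlm : 0 < Real.log m := Real.log_pos hm1
        have hKm : (K:ℝ) + 1 ≤ m := by exact_mod_cast hmK
        have hle : Real.log ((m:ℝ)+1+K) ≤ Real.log 2 + Real.log m := by
          rw [← Real.log_mul (by norm_num) (by linarith)]
          apply Real.log_le_log (by linarith)
          linarith
        rw [div_le_iff₀ hlm, add_mul, div_mul_cancel₀ _ (ne_of_gt hlm), one_mul]
        linarith
    have := ha.add hb
    rw [zero_add] at this
    apply this.congr'
    filter_upwards [eventually_ge_atTop 1] with m hm
    have hm1 : (0:ℝ) < m := by exact_mod_cast hm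
    have hmh : (0:ℝ) < (m:ℝ)+1+K := by
      have : (0:ℝ) ≤ K := Nat.cast_nonneg K
      linarith
    rw [Real.log_mul (by linarith) (ne_of_gt hmh), add_div]
  have hg1 : Tendsto (fun m:ℕ => ((m:ℝ)+1+K)/m) atTop (nhds 1) := by
    have hinv : Tendsto (fun m:ℕ => ((1:ℝ)+K)/m) atTop (nhds 0) :=
      tendsto_const_nhds.div_atTop tendsto_natCast_atTop_atTop
    have := (tendsto_const_nhds : Tendsto (fun _:ℕ => (1:ℝ)) atTop (nhds 1)).add hinv
    rw [add_zero] at this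
    apply this.congr'
    filter_upwards [eventually_ge_atTop 1] with m hm
    have hm0 : (m:ℝ) ≠ 0 := by
      have : (1:ℝ) ≤ m := by exact_mod_cast hm
      linarith
    field_simp
    ring
  have hg : Tendsto (fun m : ℕ =>
      (((m:ℝ)+1+K) * Real.log (α' * ((m:ℝ)+1+K))) / ((m:ℝ)*Real.log m)) atTop (nhds 1) := by
    have := hg1.mul hg2
    rw [one_mul] at this
    apply this.congr
    intro m
    rw [div_mul_div_comm]
  -- the per-δ eventual inequality
  have hQ : ∀ δ : ℝ, 0 < δ → ∃ a : ℕ, ∀ m, a ≤ m → (2 ≤ m ∧ n₁ ≤ m ∧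
      (((m:ℝ)+1+K) * Real.log (α' * ((m:ℝ)+1+K)) ≤ (2+2*δ) * (-Real.log (B m)))) := by
    intro δ hδ
    have hlim : Tendsto (fun m : ℕ =>
        (2+2*δ) * (-Real.log (B m) / ((m:ℝ)*Real.log m))) atTop
        (nhds ((2+2*δ)*(1/2))) := hf.const_mul _
    have hev : ∀ᶠ m : ℕ in atTop,
        (((m:ℝ)+1+K) * Real.log (α' * ((m:ℝ)+1+K))) / ((m:ℝ)*Real.log m)
          < (2+2*δ) * (-Real.log (B m) / ((m:ℝ)*Real.log m)) :=
      hg.eventually_lt hlim (by nlinarith)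
    rw [eventually_atTop] at hev
    obtain ⟨a, ha⟩ := hev
    refine ⟨max a (max 2 n₁), fun m hm => ?_⟩
    have hm2 : 2 ≤ m := le_trans (le_trans (le_max_left 2 n₁) (le_max_right a _)) hm
    have hmn₁ : n₁ ≤ m := le_trans (le_trans (le_max_right 2 n₁) (le_max_right a _)) hm
    refine ⟨hm2, hmn₁, ?_⟩
    have h := ha m (le_trans (le_max_left _ _) hm)
    have hm1 : (1:ℝ) < m := by exact_mod_cast hm2
    have hD : 0 < (m:ℝ)*Real.log m := mul_pos (by linarith) (Real.log_pos hm1)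
    rw [← mul_div_assoc] at h
    exact le_of_lt ((div_lt_div_iff_of_pos_right hD).mp h)
  -- existence of the threshold
  have ex : ∀ ε : ℝ, 0 < ε → ∃ n : ℕ, ∀ m, n ≤ m → Bfull m ≤ ε := by
    intro ε hε'
    exact eventually_atTop.mp (Filter.Tendsto.eventually_le_const hε' hBfull0)
  refine ⟨fun ε => if h : 0 < ε then Nat.find (ex ε h) else 1,
    fun δ => if h : 0 < δ then
      max 1 ((α' * (((hQ δ h).choose + K : ℕ) : ℝ)) ^ ((hQ δ h).choose + K)) else 1, ?_⟩
  intro δ hδ ε hεI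
  obtain ⟨hε0', hε1'⟩ := hεI
  simp only [dif_pos hδ, dif_pos hε0']
  set a : ℕ := (hQ δ hδ).choose with hadef
  have hQa := (hQ δ hδ).choose_spec
  rw [← hadef] at hQa
  set Nε : ℕ := Nat.find (ex ε hε0') with hNdef
  have hspec : ∀ m, Nε ≤ m → Bfull m ≤ ε := Nat.find_spec (ex ε hε0')
  have hNn₁ : n₁ ≤ Nε := by
    by_contra h'
    push_neg at h'
    have := hspec Nε le_rfl
    rw [hBfulldef] at this
    simp only [if_pos h'] at this
    have := abs_nonneg (εf Nε (ϱ Nε))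
    linarith
  have hN1 : 1 ≤ Nε := le_trans hn₁1 hNn₁
  have hminN : ∀ k : ℕ, k + 1 = Nε → ε < Bfull k := by
    intro k hk
    have hk' : k < Nat.find (ex ε hε0') := hNdef ▸ (by omega : k < Nε)
    have hnot := Nat.find_min (ex ε hε0') hk'
    push_neg at hnot
    obtain ⟨m', hm'ge, hm'gt⟩ := hnot
    rcases eq_or_lt_of_le hm'ge with rfl | hlt
    · exact hm'gt
    · exact absurd (hspec m' (by omega)) (not_le.mpr hm'gt)
  clear_value a Nε
  clear hadef hNdef
  have hC0 : (0:ℝ) ≤ max 1 ((α' * (((a + K : ℕ)) : ℝ)) ^ (a + K)) :=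
    le_trans zero_le_one (le_max_left _ _)
  have hεpow1 : (1:ℝ) ≤ ε ^ (-(2 + 2 * δ)) :=
    Real.one_le_rpow_of_pos_of_le_one_of_nonpos hε0' hε1' (by linarith)
  have hεpow0 : (0:ℝ) ≤ ε ^ (-(2 + 2 * δ)) := le_trans zero_le_one hεpow1
  refine ⟨hC0, hN1, ?_, ?_⟩
  · -- cost bound
    intro n hn1 hnN
    have hγ' : γ n ≤ (α' * n) ^ n := by
      refine (hγ n hn1).trans (pow_le_pow_left₀ (by positivity) ?_ n)
      have : (0:ℝ) ≤ n := Nat.cast_nonneg n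
      nlinarith
    rcases le_or_gt Nε a with hNa | haN
    · -- small threshold: absorb into the constant
      have hmono : (α' * (n:ℝ)) ^ n ≤ (α' * (((a + K : ℕ)) : ℝ)) ^ (a + K) := by
        apply cost_pow_mono hα'1 hn1
        omega
      have : γ n ≤ max 1 ((α' * (((a + K : ℕ)) : ℝ)) ^ (a + K)) :=
        le_trans (hγ'.trans hmono) (le_max_right _ _)
      calc γ n ≤ max 1 ((α' * (((a + K : ℕ)) : ℝ)) ^ (a + K)) := this
        _ = max 1 ((α' * (((a + K : ℕ)) : ℝ)) ^ (a + K)) * 1 := (mul_one _).symm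
        _ ≤ max 1 ((α' * (((a + K : ℕ)) : ℝ)) ^ (a + K)) * ε ^ (-(2 + 2 * δ)) := by
            apply mul_le_mul_of_nonneg_left hεpow1 hC0
    · -- large threshold: use minimality
      obtain ⟨m, hmN⟩ : ∃ m : ℕ, Nε = m + 1 := ⟨Nε - 1, by omega⟩
      have ham : a ≤ m := by omega
      obtain ⟨hm2, hmn₁, hineq⟩ := hQa m ham
      have hm1 : 1 ≤ m := by omega
      have hmin : ε < Bfull m := hminN m hmN.symm
      rw [hBfulldef] at hmin
      simp only [if_neg (Nat.not_lt.mpr hmn₁)] at hmin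
      have hBmpos : 0 < B m := hBpos m hm1
      -- pow bound
      have hcast : (((m + 1 + K : ℕ)) : ℝ) = (m:ℝ) + 1 + K := by push_cast; ring
      have hbpos : (0:ℝ) < α' * ((m:ℝ)+1+K) := by
        have h0K : (0:ℝ) ≤ K := Nat.cast_nonneg K
        have h0m : (0:ℝ) ≤ m := Nat.cast_nonneg m
        nlinarith
      have hexp : (α' * ((m:ℝ)+1+K)) ^ (m+1+K)
          = Real.exp ((((m+1+K : ℕ)) : ℝ) * Real.log (α' * ((m:ℝ)+1+K))) := by
        rw [Real.exp_nat_mul, Real.exp_log hbpos]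
      have hstep : (α' * ((m:ℝ)+1+K)) ^ (m+1+K) ≤ B m ^ (-(2 + 2 * δ)) := by
        rw [hexp, Real.rpow_def_of_pos hBmpos]
        apply Real.exp_le_exp.mpr
        rw [hcast]
        calc ((m:ℝ)+1+K) * Real.log (α' * ((m:ℝ)+1+K))
            ≤ (2+2*δ) * (-Real.log (B m)) := hineq
          _ = Real.log (B m) * (-(2 + 2 * δ)) := by ring
      have hrpow : B m ^ (-(2 + 2 * δ)) ≤ ε ^ (-(2 + 2 * δ)) :=
        Real.rpow_le_rpow_of_nonpos hε0' (le_of_lt hmin) (by linarith)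
      have hmono : (α' * (n:ℝ)) ^ n ≤ (α' * ((m:ℝ)+1+K)) ^ (m+1+K) := by
        have := cost_pow_mono hα'1 hn1 (show n ≤ m+1+K by omega)
        rwa [hcast] at this
      calc γ n ≤ (α' * (n:ℝ)) ^ n := hγ'
        _ ≤ (α' * ((m:ℝ)+1+K)) ^ (m+1+K) := hmono
        _ ≤ ε ^ (-(2 + 2 * δ)) := hstep.trans hrpow
        _ = 1 * ε ^ (-(2 + 2 * δ)) := (one_mul _).symm
        _ ≤ max 1 ((α' * (((a + K : ℕ)) : ℝ)) ^ (a + K)) * ε ^ (-(2 + 2 * δ)) :=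
            mul_le_mul_of_nonneg_right (le_max_left _ _) hεpow0
  · -- error bound
    intro n hn
    have hn₁n : n₁ ≤ n := le_trans hNn₁ hn
    have := hspec n hn
    rw [hBfulldef] at this
    simp only [if_neg (Nat.not_lt.mpr hn₁n)] at this
    exact (hεB n hn₁n).trans this
end
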